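/- arXiv:1703.00718 — 2 statements merged into one kernel-verified Lean document; each statement's English description precedes it below -/
import Mathlib

section
/- Let char(F) ≠ 2, K = F(√b) a quadratic field extension of F with nontrivial automorphism σ, and A = (K/F, σ, λ√b) a nonassociative quaternion algebra with λ ∈ F^×. Suppose there exists k ∈ K^× with k·σ(k) = −1. Let c ∈ K∖F and let j be the smallest positive integer with c^j ∈ F^×. If j is even, then Aut_F(A) contains a subgroup isomorphic to the dicyclic group of order 2j (generated by H_{σ,k} and G_c). If j is odd, then Aut_F(A) contains a subgroup isomorphic to the semidirect product ℤ/jℤ ⋊_{j−1} ℤ/4ℤ. In particular, Aut_F(A) always contains a subgroup isomorphic to ℤ/4ℤ. -/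
/-! ## The Petit algebra `S_f = K[t;σ]/K[t;σ]f`

For a twisted polynomial ring `R = K[t;σ]` (multiplication determined by `t·a = σ(a)·t`)
and the monic skew polynomial `f(t) = t^m - Σ_{i<m} a_i t^i` (encoded by its coefficient
vector `a : Fin m → K`), the Petit algebra `S_f` is realised on coefficient vectors
`Fin m → K` (the polynomials of degree `< m`), with multiplication `g ∘ h = (gh) mod_r f`. -/

/-- The remainder of `t^s` after right division by `f(t) = t^m - Σ_{i<m} a_i t^i`:
for `s < m` it is `t^s` itself, and for `s ≥ m` one uses
`t^s ≡ Σ_i σ^{s-m}(a_i) t^{s-m+i} (mod R·f)`. -/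
noncomputable def tred {K : Type*} [Field K] (σ : K → K) (m : ℕ) (a : Fin m → K) (s : ℕ) :
    Fin m → K :=
  if _h : s < m then (fun i => if (i : ℕ) = s then (1 : K) else 0)
  else ∑ i : Fin m, σ^[s - m] (a i) • tred σ m a (s - m + (i : ℕ))
termination_by s
decreasing_by
  have hi := i.isLt
  omega

/-- The multiplication `g ∘ h = (gh) mod_r f` of the Petit algebra `S_f`. -/
noncomputable def pmul {K : Type*} [Field K] (σ : K → K) {m : ℕ} (a : Fin m → K)
    (x y : Fin m → K) : Fin m → K :=
  ∑ i : Fin m, ∑ j : Fin m, (x i * σ^[(i : ℕ)] (y j)) • tred σ m a ((i : ℕ) + (j : ℕ))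

/-- The unit element `1` of `S_f`. -/
noncomputable def pone (K : Type*) [Field K] (m : ℕ) : Fin m → K :=
  fun i => if (i : ℕ) = 0 then 1 else 0

/-- The element `t` of `S_f`. -/
noncomputable def tvec (K : Type*) [Field K] (m : ℕ) : Fin m → K :=
  fun i => if (i : ℕ) = 1 then 1 else 0

/-- The canonical copy of `c ∈ K` inside `S_f`. -/
noncomputable def iota (K : Type*) [Field K] (m : ℕ) (c : K) : Fin m → K :=
  fun i => if (i : ℕ) = 0 then c else 0

/-- `S_f` is associative; by Petit's theorem this holds if and only if `f` is
invariant (i.e. `R·f` is a two-sided ideal of `R = K[t;σ]`). -/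
def PAssoc {K : Type*} [Field K] (σ : K → K) {m : ℕ} (a : Fin m → K) : Prop :=
  ∀ x y z : Fin m → K, pmul σ a (pmul σ a x y) z = pmul σ a x (pmul σ a y z)

/-- `H` is an automorphism of the algebra `S_f` over `F = Fix(σ)`: an `F`-linear
bijection preserving the multiplication and the unit. -/
structure IsPetitAut {K : Type*} [Field K] (σ : K → K) {m : ℕ} (a : Fin m → K)
    (H : (Fin m → K) → (Fin m → K)) : Prop where
  bijective : Function.Bijective H
  map_add : ∀ x y, H (x + y) = H x + H y
  map_smul : ∀ c : K, σ c = c → ∀ x, H (c • x) = c • H x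
  map_mul : ∀ x y, H (pmul σ a x y) = pmul σ a (H x) (H y)
  map_one : H (pone K m) = pone K m

/-- `H` is an inner automorphism `x ↦ (c_l ∘ x) ∘ c` of `S_f`, where `c_l` is a
left inverse of `c`. -/
def IsInnerPetit {K : Type*} [Field K] (σ : K → K) {m : ℕ} (a : Fin m → K)
    (H : (Fin m → K) → (Fin m → K)) : Prop :=
  ∃ c cl : Fin m → K, pmul σ a cl c = pone K m ∧
    ∀ x, H x = pmul σ a (pmul σ a cl x) c

/-- The map `H_{τ,k} : Σ x_i t^i ↦ τ(x_0) + Σ_{i≥1} τ(x_i)·(Π_{l<i} σ^l(k))·t^i`. -/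
noncomputable def Hmap {K : Type*} [Field K] (σ τ : K → K) {m : ℕ} (k : K)
    (x : Fin m → K) : Fin m → K :=
  fun i => τ (x i) * ∏ l ∈ Finset.range (i : ℕ), σ^[l] k


section PetitAux

variable {K : Type*} [Field K]

private lemma funext2' {f g : Fin 2 → K} (h0 : f 0 = g 0) (h1 : f 1 = g 1) : f = g :=
  funext fun i => by fin_cases i <;> assumption

private lemma tred0 (σ : K → K) (a : Fin 2 → K) :
    tred σ 2 a 0 = fun i : Fin 2 => if (i : ℕ) = 0 then (1:K) else 0 := by
  rw [tred]; simp

private lemma tred1 (σ : K → K) (a : Fin 2 → K) :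
    tred σ 2 a 1 = fun i : Fin 2 => if (i : ℕ) = 1 then (1:K) else 0 := by
  rw [tred]; simp

private lemma tred2 (σ : K → K) (a : Fin 2 → K) :
    tred σ 2 a 2 = a 0 • tred σ 2 a 0 + a 1 • tred σ 2 a 1 := by
  rw [tred]
  norm_num [Fin.sum_univ_two]

private lemma pmul0 (σ : K → K) (a : Fin 2 → K) (x y : Fin 2 → K) :
    pmul σ a x y 0 = x 0 * y 0 + x 1 * σ (y 1) * a 0 := by
  simp [pmul, Fin.sum_univ_two, tred0, tred1, tred2]
  try ring

private lemma pmul1 (σ : K → K) (a : Fin 2 → K) (x y : Fin 2 → K) :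
    pmul σ a x y 1 = x 0 * y 1 + x 1 * σ (y 0) + x 1 * σ (y 1) * a 1 := by
  simp [pmul, Fin.sum_univ_two, tred0, tred1, tred2]
  try ring

private lemma Hmap0 (σ τ : K → K) (k : K) (x : Fin 2 → K) :
    Hmap σ τ (m := 2) k x 0 = τ (x 0) := by
  simp [Hmap]

private lemma Hmap1 (σ τ : K → K) (k : K) (x : Fin 2 → K) :
    Hmap σ τ (m := 2) k x 1 = τ (x 1) * k := by
  simp [Hmap]

private lemma pone0 : pone K 2 0 = 1 := by simp [pone]
private lemma pone1 : pone K 2 1 = 0 := by simp [pone]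

variable {F : Type*} [Field F] [Algebra F K]

/-- Decomposition of elements of a quadratic extension in the basis `{1, rb}`. -/
private lemma decomp2 (rb : K) (hrbF : rb ∉ Set.range (algebraMap F K))
    (hdim : Module.finrank F K = 2) (z : K) :
    ∃ u v : F, z = algebraMap F K u + v • rb := by
  have hli : LinearIndependent F ![(1 : K), rb] := by
    rw [LinearIndependent.pair_iff]
    intro s t hst
    simp only [Algebra.smul_def, mul_one] at hst
    by_cases ht : t = 0
    · subst ht
      simp only [map_zero, zero_mul, add_zero] at hst
      exact ⟨(algebraMap F K).injective (by rw [hst, map_zero]), rfl⟩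
    · exfalso
      apply hrbF
      refine ⟨-(s/t), ?_⟩
      have htK : algebraMap F K t ≠ 0 := fun h =>
        ht ((algebraMap F K).injective (by rw [h, map_zero]))
      rw [map_neg, map_div₀]
      field_simp
      linear_combination -hst
  obtain ⟨B, hB⟩ : ∃ B : Module.Basis (Fin 2) F K, ⇑B = ![(1:K), rb] :=
    ⟨_, coe_basisOfLinearIndependentOfCardEqFinrank hli (by simp [hdim])⟩
  have hz := B.sum_repr z
  rw [Fin.sum_univ_two, hB] at hz
  simp only [Matrix.cons_val_zero, Matrix.cons_val_one, Matrix.head_cons] at hz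
  rw [Algebra.smul_def, mul_one] at hz
  exact ⟨B.repr z 0, B.repr z 1, hz.symm⟩

private lemma prodFinExt {s t : ℕ} {m m' : Fin s} {n n' : Fin t}
    (h1 : (m : ℕ) = m') (h2 : (n : ℕ) = n') : ((m, n) : Fin s × Fin t) = (m', n') := by
  rw [Prod.mk.injEq]
  exact ⟨Fin.ext h1, Fin.ext h2⟩

private lemma two_ne_zero_K (hchar : (2:F) ≠ 0) : (2:K) ≠ 0 := by
  intro h
  apply hchar
  apply (algebraMap F K).injective
  rw [map_ofNat, map_zero, h]

private lemma sigma_struct (hchar : (2:F) ≠ 0) (rb : K)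
    (hrbF : rb ∉ Set.range (algebraMap F K)) (hdim : Module.finrank F K = 2)
    (σ : K ≃ₐ[F] K) (hσ : σ rb = -rb) :
    (∀ z, σ (σ z) = z) ∧ (∀ z : K, σ z = z ↔ z ∈ Set.range (algebraMap F K)) := by
  have hrb0 : rb ≠ 0 := fun h => hrbF ⟨0, by rw [map_zero, h]⟩
  have h2K : (2:K) ≠ 0 := two_ne_zero_K hchar
  have hd := decomp2 (F := F) rb hrbF hdim
  constructor
  · intro z
    obtain ⟨u, v, rfl⟩ := hd z
    simp only [Algebra.smul_def, map_add, map_mul, AlgEquiv.commutes, hσ, map_neg, mul_neg,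
      neg_neg]
  · intro z
    constructor
    · intro hz
      obtain ⟨u, v, hzuv⟩ := hd z
      rw [Algebra.smul_def] at hzuv
      rw [hzuv, map_add, map_mul, AlgEquiv.commutes, AlgEquiv.commutes, hσ] at hz
      have hvrb : algebraMap F K v * rb = 0 := by
        have h2 : (2:K) * (algebraMap F K v * rb) = 0 := by linear_combination - hz
        rcases mul_eq_zero.mp h2 with h | h
        · exact absurd h h2K
        · exact h
      rcases mul_eq_zero.mp hvrb with h | h
      · have hv : v = 0 := (algebraMap F K).injective (by rw [h, map_zero])
        exact ⟨u, by rw [hzuv, hv, map_zero, zero_mul, add_zero]⟩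
      · exact absurd h hrb0
    · rintro ⟨u, rfl⟩
      exact σ.commutes u

end PetitAux

/-- **Theorem 6.6.** Let `char F ≠ 2`, `K = F(√b)` a quadratic field extension with
nontrivial automorphism `σ` (`σ(√b) = −√b`), and let `A = (K/F, σ, λ√b)` be the
nonassociative quaternion algebra `S_f`, `f(t) = t² − λ√b`, `λ ∈ F^×`.  Suppose
`k ∈ K^×` satisfies `kσ(k) = −1`.  Let `c ∈ K∖F` and let `j` be minimal positive with
`c^j ∈ F^×`.  If `j` is even then `Aut_F(A)` contains the dicyclic group `Dic_{j/2}`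
of order `2j` (generated by `X = H_{σ,k}` and `Y = G_c`, with presentation
`⟨x,y | y^{2l} = 1, x² = y^l, x⁻¹yx = y⁻¹⟩`, `l = j/2`); if `j` is odd then
`Aut_F(A)` contains `ℤ/jℤ ⋊_{j−1} ℤ/4ℤ` (presentation
`⟨x,y | x^j = 1, y^4 = 1, yxy⁻¹ = x^{j−1}⟩`, `x = G_c`, `y = H_{σ,k}`).  In
particular, `Aut_F(A)` always contains a subgroup isomorphic to `ℤ/4ℤ`. -/
theorem stmt18 {F K : Type*} [Field F] [Field K] [Algebra F K]
    (hchar : (2 : F) ≠ 0)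
    (b : F) (rb : K) (hrb : rb * rb = algebraMap F K b)
    (hrbF : rb ∉ Set.range (algebraMap F K))
    (hdim : Module.finrank F K = 2)
    (σ : K ≃ₐ[F] K) (hσ : σ rb = -rb)
    (lam : F) (hlam : lam ≠ 0)
    (k : K) (hk0 : k ≠ 0) (hk : k * σ k = -1)
    (c : K) (hc : c ∉ Set.range (algebraMap F K))
    (j : ℕ) (hj : 0 < j) (hcj : c ^ j ∈ Set.range (algebraMap F K))
    (hmin : ∀ r : ℕ, 0 < r → r < j → c ^ r ∉ Set.range (algebraMap F K)) :
    let a : Fin 2 → K := fun i => if (i : ℕ) = 0 then algebraMap F K lam * rb else 0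
    let X : (Fin 2 → K) → Fin 2 → K := Hmap (⇑σ) (⇑σ) k
    let Y : (Fin 2 → K) → Fin 2 → K := Hmap (⇑σ) (id : K → K) (c⁻¹ * σ c)
    -- `j` even: the dicyclic group `Dic_{j/2}` of order `2j`, generated by `X`, `Y`
    (Even j →
      IsPetitAut (⇑σ) a X ∧ IsPetitAut (⇑σ) a Y ∧
      Y^[j] = id ∧ X ∘ X = Y^[j / 2] ∧ Y ∘ X = X ∘ Y^[j - 1] ∧
      Function.Injective fun p : Fin j × Fin 2 => Y^[(p.1 : ℕ)] ∘ X^[(p.2 : ℕ)])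
    -- `j` odd: the semidirect product `ℤ/jℤ ⋊_{j−1} ℤ/4ℤ`, generated by `Y`, `X`
    ∧ (Odd j →
      IsPetitAut (⇑σ) a X ∧ IsPetitAut (⇑σ) a Y ∧
      Y^[j] = id ∧ X^[4] = id ∧ X ∘ Y = Y^[j - 1] ∘ X ∧
      Function.Injective fun p : Fin j × Fin 4 => Y^[(p.1 : ℕ)] ∘ X^[(p.2 : ℕ)])
    -- in particular, a cyclic subgroup of order `4`
    ∧ (IsPetitAut (⇑σ) a X ∧ X^[4] = id ∧ ∀ r : ℕ, 0 < r → r < 4 → X^[r] ≠ id) := by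
  intro a X Y
  -- basic facts
  have h2K : (2:K) ≠ 0 := two_ne_zero_K (K := K) hchar
  have hrb0 : rb ≠ 0 := fun h => hrbF ⟨0, by rw [map_zero, h]⟩
  obtain ⟨hσσ, hfix⟩ := sigma_struct hchar rb hrbF hdim σ hσ
  have hc0 : c ≠ 0 := fun h => hc ⟨0, by rw [map_zero, h]⟩
  have hσc0 : σ c ≠ 0 := fun h => hc0 (by rw [← hσσ c, h, map_zero])
  have ha0 : a 0 = algebraMap F K lam * rb := rfl
  have ha1 : a 1 = 0 := rfl
  have hσa0 : σ (a 0) = -(a 0) := by rw [ha0, map_mul, AlgEquiv.commutes, hσ, mul_neg]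
  have hX0 : ∀ x, X x 0 = σ (x 0) := fun x => Hmap0 _ _ _ x
  have hX1 : ∀ x, X x 1 = σ (x 1) * k := fun x => Hmap1 _ _ _ x
  set ω : K := c⁻¹ * σ c with hωdef
  have hY0 : ∀ x, Y x 0 = x 0 := fun x => Hmap0 _ _ _ x
  have hY1 : ∀ x, Y x 1 = x 1 * ω := fun x => Hmap1 _ _ _ x
  have hω0 : ω ≠ 0 := mul_ne_zero (inv_ne_zero hc0) hσc0
  have hσω : σ ω = ω⁻¹ := by
    rw [hωdef, map_mul, map_inv₀, hσσ, mul_inv, inv_inv, mul_comm]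
  have hωpow : ∀ d : ℕ, ω ^ d = (c ^ d)⁻¹ * σ (c ^ d) := by
    intro d
    rw [hωdef, mul_pow, inv_pow, map_pow]
  have hωd1 : ∀ d : ℕ, ω ^ d = 1 → σ (c ^ d) = c ^ d := by
    intro d h
    rw [hωpow] at h
    have hcd : c ^ d ≠ 0 := pow_ne_zero _ hc0
    field_simp at h
    rw [map_pow]
    rwa [map_pow] at h
  have hωj : ω ^ j = 1 := by
    obtain ⟨u, hu⟩ := hcj
    have hu0 : algebraMap F K u ≠ 0 := by rw [hu]; exact pow_ne_zero _ hc0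
    rw [hωpow, ← hu, AlgEquiv.commutes, inv_mul_cancel₀ hu0]
  have hsmall : ∀ d : ℕ, d < j → ω ^ d = 1 → d = 0 := by
    intro d hdj h
    by_contra hd0
    exact hmin d (Nat.pos_of_ne_zero hd0) hdj ((hfix _).mp (hωd1 d h))
  have hmod : ∀ d : ℕ, ω ^ d = ω ^ (d % j) := by
    intro d
    conv_lhs => rw [← Nat.div_add_mod d j]
    rw [pow_add, pow_mul, hωj, one_pow, one_mul]
  have hdvd : ∀ d : ℕ, ω ^ d = 1 → j ∣ d := by
    intro d h
    rw [hmod] at h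
    exact Nat.dvd_of_mod_eq_zero (hsmall _ (Nat.mod_lt d hj) h)
  have hinj : ∀ m m' : ℕ, m < j → m' < j → ω ^ m = ω ^ m' → m = m' := by
    have key : ∀ m m' : ℕ, m ≤ m' → m' < j → ω ^ m = ω ^ m' → m = m' := by
      intro m m' hle hm' h
      have h1 : ω ^ m * ω ^ (m' - m) = ω ^ m * 1 := by
        rw [← pow_add, Nat.add_sub_cancel' hle, h, mul_one]
      have h2 := mul_left_cancel₀ (pow_ne_zero m hω0) h1
      have := hsmall _ (by omega) h2
      omega
    intro m m' hm hm' h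
    rcases le_total m m' with hle | hle
    · exact key m m' hle hm' h
    · exact (key m' m hle hm h.symm).symm
  have hneg : Odd j → ∀ m m' : ℕ, ω ^ m ≠ -ω ^ m' := by
    intro hodd m m' heq
    have hmj : m' % j ≤ j := le_of_lt (Nat.mod_lt m' hj)
    have h1 : ω ^ (m + (j - m' % j)) = -1 := by
      rw [pow_add, heq, hmod m', neg_mul, ← pow_add,
        show m' % j + (j - m' % j) = j by omega, hωj]
    have h2 : ω ^ ((m + (j - m' % j)) * 2) = 1 := by
      rw [pow_mul, h1, neg_one_sq]
    have hcop : Nat.Coprime j 2 := Nat.coprime_two_right.mpr hodd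
    have h4 : j ∣ m + (j - m' % j) := hcop.dvd_of_dvd_mul_right (hdvd _ h2)
    have h5 : ω ^ (m + (j - m' % j)) = 1 := by
      obtain ⟨t, ht⟩ := h4
      rw [ht, pow_mul, hωj, one_pow]
    rw [h5] at h1
    exact h2K (by linear_combination h1)
  -- iterates of Y
  have hYit0 : ∀ (n : ℕ) x, Y^[n] x 0 = x 0 := by
    intro n
    induction n with
    | zero => intro x; rfl
    | succ n ih => intro x; rw [Function.iterate_succ_apply', hY0, ih]
  have hYit1 : ∀ (n : ℕ) x, Y^[n] x 1 = x 1 * ω ^ n := by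
    intro n
    induction n with
    | zero => intro x; simp
    | succ n ih => intro x; rw [Function.iterate_succ_apply', hY1, ih, pow_succ, mul_assoc]
  have hYj : Y^[j] = id := by
    funext x
    apply funext2'
    · rw [hYit0]; rfl
    · rw [hYit1, hωj, mul_one]; rfl
  -- iterates of X
  have hXX0 : ∀ x, X (X x) 0 = x 0 := fun x => by rw [hX0, hX0, hσσ]
  have hXX1 : ∀ x, X (X x) 1 = -(x 1) := by
    intro x
    rw [hX1, hX1, map_mul, hσσ, show x 1 * σ k * k = x 1 * (k * σ k) by ring, hk,
      mul_neg_one]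
  have hX4 : X^[4] = id := by
    funext x
    apply funext2'
    · show X (X (X (X x))) 0 = x 0
      rw [hXX0, hXX0]
    · show X (X (X (X x))) 1 = x 1
      rw [hXX1, hXX1, neg_neg]
  -- automorphism property for X
  have hautX : IsPetitAut (⇑σ) a X := by
    refine ⟨?_, ?_, ?_, ?_, ?_⟩
    · rw [Function.bijective_iff_has_inverse]
      refine ⟨X^[3], fun x => ?_, fun x => ?_⟩
      · calc X^[3] (X x) = X^[4] x := (Function.iterate_succ_apply X 3 x).symm
          _ = x := congrFun hX4 x
      · calc X (X^[3] x) = X^[4] x := (Function.iterate_succ_apply' X 3 x).symm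
          _ = x := congrFun hX4 x
    · intro x y
      apply funext2'
      · rw [hX0, Pi.add_apply, Pi.add_apply, hX0, hX0, map_add]
      · rw [hX1, Pi.add_apply, Pi.add_apply, hX1, hX1, map_add]
        ring
    · intro e he x
      apply funext2'
      · rw [hX0, Pi.smul_apply, Pi.smul_apply, hX0, smul_eq_mul, smul_eq_mul, map_mul, he]
      · rw [hX1, Pi.smul_apply, Pi.smul_apply, hX1, smul_eq_mul, smul_eq_mul, map_mul, he]
        ring
    · intro x y
      apply funext2'
      · simp only [hX0, hX1, pmul0, map_add, map_mul, hσσ, hσa0]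
        linear_combination (-(σ (x 1) * y 1 * a 0)) * hk
      · simp only [hX1, hX0, pmul1, ha1, mul_zero, add_zero, map_add, map_mul, hσσ]
        ring
    · apply funext2'
      · rw [hX0, pone0, map_one]
      · rw [hX1, pone1, map_zero, zero_mul]
  -- automorphism property for Y
  have hjj : j - 1 + 1 = j := by omega
  have hautY : IsPetitAut (⇑σ) a Y := by
    refine ⟨?_, ?_, ?_, ?_, ?_⟩
    · rw [Function.bijective_iff_has_inverse]
      refine ⟨Y^[j-1], fun x => ?_, fun x => ?_⟩
      · calc Y^[j-1] (Y x) = Y^[j-1+1] x := (Function.iterate_succ_apply Y (j-1) x).symm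
          _ = x := by rw [hjj, hYj]; rfl
      · calc Y (Y^[j-1] x) = Y^[j-1+1] x := (Function.iterate_succ_apply' Y (j-1) x).symm
          _ = x := by rw [hjj, hYj]; rfl
    · intro x y
      apply funext2'
      · rw [hY0, Pi.add_apply, Pi.add_apply, hY0, hY0]
      · rw [hY1, Pi.add_apply, Pi.add_apply, hY1, hY1]
        ring
    · intro e he x
      apply funext2'
      · rw [hY0, Pi.smul_apply, Pi.smul_apply, hY0]
      · rw [hY1, Pi.smul_apply, Pi.smul_apply, hY1, smul_eq_mul, smul_eq_mul]
        ring
    · intro x y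
      apply funext2'
      · simp only [hY0, hY1, pmul0, map_mul, hσω]
        linear_combination (-(x 1 * σ (y 1) * a 0)) * (mul_inv_cancel₀ hω0)
      · simp only [hY0, hY1, pmul1, ha1, mul_zero, add_zero]
        ring
    · apply funext2'
      · rw [hY0]
      · rw [hY1, pone1, zero_mul]
  -- commutation relation
  have hω1j : ω ^ (j - 1) = ω⁻¹ := by
    refine eq_inv_of_mul_eq_one_left ?_
    rw [← pow_succ, hjj, hωj]
  have hσωpow : σ (ω ^ (j - 1)) = ω := by
    rw [map_pow, hσω, inv_pow, hω1j, inv_inv]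
  have hYX : Y ∘ X = X ∘ Y^[j-1] := by
    funext x
    apply funext2'
    · show Y (X x) 0 = X (Y^[j-1] x) 0
      rw [hY0, hX0, hX0, hYit0]
    · show Y (X x) 1 = X (Y^[j-1] x) 1
      rw [hY1, hX1, hX1, hYit1, map_mul, hσωpow]
      ring
  have hXY : X ∘ Y = Y^[j-1] ∘ X := by
    funext x
    apply funext2'
    · show X (Y x) 0 = Y^[j-1] (X x) 0
      rw [hX0, hY0, hYit0, hX0]
    · show X (Y x) 1 = Y^[j-1] (X x) 1
      rw [hX1, hY1, map_mul, hσω, hYit1, hX1, hω1j]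
      ring
  -- test vectors
  have hrbne : rb ≠ -rb := by
    intro h
    rcases mul_eq_zero.mp (show (2:K) * rb = 0 by linear_combination h) with h' | h'
    · exact h2K h'
    · exact hrb0 h'
  set vrb : Fin 2 → K := (fun i : Fin 2 => if (i : ℕ) = 0 then rb else 0) with hvrb
  have hv0 : vrb 0 = rb := by rw [hvrb]; norm_num
  have hv1 : vrb 1 = 0 := by rw [hvrb]; norm_num
  have he0 : tvec K 2 0 = 0 := by simp [tvec]
  have he1 : tvec K 2 1 = 1 := by simp [tvec]
  have hit0X : ∀ (n : ℕ) x, X^[n] x 0 = σ^[n] (x 0) := by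
    intro n
    induction n with
    | zero => intro x; rfl
    | succ n ih =>
      intro x
      rw [Function.iterate_succ_apply', hX0, ih, Function.iterate_succ_apply']
  have hs1 : σ^[1] rb = -rb := hσ
  have hs2 : σ^[2] rb = rb := hσσ rb
  have hs3 : σ^[3] rb = -rb := by
    show σ (σ (σ rb)) = -rb
    rw [hσ, map_neg, map_neg, hσσ]
  have hs0 : σ^[0] rb = rb := rfl
  have hXe0 : X^[0] (tvec K 2) 1 = 1 := he1
  have hXe1 : X^[1] (tvec K 2) 1 = k := by
    show X (tvec K 2) 1 = k
    rw [hX1, he1, map_one, one_mul]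
  have hXe2 : X^[2] (tvec K 2) 1 = -1 := by
    show X (X (tvec K 2)) 1 = -1
    rw [hXX1, he1]
  have hXe3 : X^[3] (tvec K 2) 1 = -k := by
    show X (X (X (tvec K 2))) 1 = -k
    rw [hX1, hXX1, he1, map_neg, map_one, neg_one_mul]
  -- evaluation of the composites
  have heval0 : ∀ (m n : ℕ), (Y^[m] ∘ X^[n]) vrb 0 = σ^[n] rb := by
    intro m n
    rw [Function.comp_apply, hYit0, hit0X, hv0]
  have heval1 : ∀ (m n : ℕ), (Y^[m] ∘ X^[n]) (tvec K 2) 1 = X^[n] (tvec K 2) 1 * ω ^ m := by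
    intro m n
    rw [Function.comp_apply, hYit1]
  have hne1 : (1:K) ≠ -1 := fun h => h2K (by linear_combination h)
  have hkne : k ≠ -k := by
    intro h
    rcases mul_eq_zero.mp (show (2:K) * k = 0 by linear_combination h) with h' | h'
    · exact h2K h'
    · exact hk0 h'
  refine ⟨?_, ?_, ?_⟩
  · -- even case
    intro hev
    obtain ⟨l, hl⟩ := hev
    have hωj2 : ω ^ (j / 2) = -1 := by
      have hh : ω ^ (j / 2) * ω ^ (j / 2) = 1 := by
        rw [← pow_add, show j / 2 + j / 2 = j by omega, hωj]
      rcases mul_self_eq_one_iff.mp hh with h | h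
      · exact absurd (hsmall (j / 2) (by omega) h) (by omega)
      · exact h
    refine ⟨hautX, hautY, hYj, ?_, hYX, ?_⟩
    · funext x
      apply funext2'
      · show X (X x) 0 = Y^[j / 2] x 0
        rw [hXX0, hYit0]
      · show X (X x) 1 = Y^[j / 2] x 1
        rw [hXX1, hYit1, hωj2, mul_neg_one]
    · intro p q h
      obtain ⟨m, n⟩ := p
      obtain ⟨m', n'⟩ := q
      dsimp only at h
      have h0 := congrFun (congrFun h vrb) 0
      rw [heval0, heval0] at h0
      have h1 := congrFun (congrFun h (tvec K 2)) 1
      rw [heval1, heval1] at h1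
      have hnlt := n.isLt
      have hnlt' := n'.isLt
      have hn : (n : ℕ) = 0 ∨ (n : ℕ) = 1 := by omega
      have hn' : (n' : ℕ) = 0 ∨ (n' : ℕ) = 1 := by omega
      rcases hn with hn | hn <;> rcases hn' with hn' | hn' <;>
        rw [hn, hn'] at h0 h1 <;>
        simp only [hs0, hs1, hXe0, hXe1, one_mul] at h0 h1
      · exact prodFinExt (hinj m m' m.isLt m'.isLt h1) (by rw [hn, hn'])
      · exact absurd h0 hrbne
      · exact absurd h0.symm hrbne
      · exact prodFinExt (hinj m m' m.isLt m'.isLt (mul_left_cancel₀ hk0 h1)) (by rw [hn, hn'])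
  · -- odd case
    intro hodd
    refine ⟨hautX, hautY, hYj, hX4, hXY, ?_⟩
    intro p q h
    obtain ⟨m, n⟩ := p
    obtain ⟨m', n'⟩ := q
    dsimp only at h
    have h0 := congrFun (congrFun h vrb) 0
    rw [heval0, heval0] at h0
    have h1 := congrFun (congrFun h (tvec K 2)) 1
    rw [heval1, heval1] at h1
    have hnlt := n.isLt
    have hnlt' := n'.isLt
    have hn : (n : ℕ) = 0 ∨ (n : ℕ) = 1 ∨ (n : ℕ) = 2 ∨ (n : ℕ) = 3 := by omega
    have hn' : (n' : ℕ) = 0 ∨ (n' : ℕ) = 1 ∨ (n' : ℕ) = 2 ∨ (n' : ℕ) = 3 := by omega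
    rcases hn with hn | hn | hn | hn <;> rcases hn' with hn' | hn' | hn' | hn' <;>
      rw [hn, hn'] at h0 h1 <;>
      simp only [hs0, hs1, hs2, hs3, hXe0, hXe1, hXe2, hXe3, one_mul, neg_mul, neg_inj] at h0 h1
    -- (0,0)
    · exact prodFinExt (hinj m m' m.isLt m'.isLt h1) (by rw [hn, hn'])
    -- (0,1)
    · exact absurd h0 hrbne
    -- (0,2)
    · exact absurd h1 (hneg hodd m m')
    -- (0,3)
    · exact absurd h0 hrbne
    -- (1,0)
    · exact absurd h0.symm hrbne
    -- (1,1)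
    · exact prodFinExt (hinj m m' m.isLt m'.isLt (mul_left_cancel₀ hk0 h1)) (by rw [hn, hn'])
    -- (1,2)
    · exact absurd h0.symm hrbne
    -- (1,3)
    · refine absurd ?_ (hneg hodd m m')
      have h2 : k * ω ^ (m : ℕ) = k * -ω ^ (m' : ℕ) := by linear_combination h1
      exact mul_left_cancel₀ hk0 h2
    -- (2,0)
    · exact absurd h1.symm (hneg hodd m' m)
    -- (2,1)
    · exact absurd h0 hrbne
    -- (2,2)
    · exact prodFinExt (hinj m m' m.isLt m'.isLt h1) (by rw [hn, hn'])
    -- (2,3)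
    · exact absurd h0 hrbne
    -- (3,0)
    · exact absurd h0.symm hrbne
    -- (3,1)
    · refine absurd ?_ (hneg hodd m' m)
      have h2 : k * ω ^ (m' : ℕ) = k * -ω ^ (m : ℕ) := by linear_combination - h1
      exact mul_left_cancel₀ hk0 h2
    -- (3,2)
    · exact absurd h0.symm hrbne
    -- (3,3)
    · exact prodFinExt (hinj m m' m.isLt m'.isLt (mul_left_cancel₀ hk0 h1)) (by rw [hn, hn'])
  · -- cyclic subgroup of order 4
    refine ⟨hautX, hX4, ?_⟩
    intro r hr0 hr4 hid
    interval_cases r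
    · have h0 := congrFun (congrFun hid vrb) 0
      simp only [id_eq] at h0
      rw [hit0X, hv0, hs1] at h0
      exact hrbne h0.symm
    · have h1 := congrFun (congrFun hid (tvec K 2)) 1
      simp only [id_eq] at h1
      rw [hXe2, he1] at h1
      exact hne1 h1.symm
    · have h0 := congrFun (congrFun hid vrb) 0
      simp only [id_eq] at h0
      rw [hit0X, hv0, hs3] at h0
      exact hrbne h0.symm
end

section
/- Suppose σ has order n (possibly infinite) with n ≥ m−1 and σ commutes with every τ ∈ Aut_F(K). Let f(t) = t^m − Σ_{i=0}^{m−1} a_i t^i and g(t) = t^m − Σ_{i=0}^{m−1} b_i t^i in K[t;σ] both be not invariant. Then S_f ≅ S_g as F-algebras if and only if there exist τ ∈ Aut_F(K) and k ∈ K^× such that τ(a_i) = (∏_{l=i}^{m−1} σ^l(k))·b_i for all i ∈ {0,…,m−1}; and every such pair (τ,k) yields an F-algebra isomorphism G_{τ,k} : S_f → S_g given by G_{τ,k}(Σ_{i=0}^{m−1} x_i t^i) = τ(x_0) + Σ_{i=1}^{m−1} τ(x_i)·(∏_{l=0}^{i−1} σ^l(k))·t^i. -/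
/-- `G` is an isomorphism of `F`-algebras `S_f → S_g` (`F = Fix(σ)`): a bijective
`F`-linear map respecting the multiplications and units. -/
structure IsPetitIso {K : Type*} [Field K] (σ : K → K) {m : ℕ} (a b : Fin m → K)
    (G : (Fin m → K) → (Fin m → K)) : Prop where
  bijective : Function.Bijective G
  map_add : ∀ x y, G (x + y) = G x + G y
  map_smul : ∀ c : K, σ c = c → ∀ x, G (c • x) = c • G x
  map_mul : ∀ x y, G (pmul σ a x y) = pmul σ b (G x) (G y)
  map_one : G (pone K m) = pone K m


section Aux
open Polynomial Finset

open Polynomial Finset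

variable {K : Type*} [Field K] (σ : K ≃+* K)

lemma iter_map_mul (i : ℕ) (x y : K) : (⇑σ)^[i] (x * y) = (⇑σ)^[i] x * (⇑σ)^[i] y := by
  induction i generalizing x y with
  | zero => simp
  | succ n ih => simp [Function.iterate_succ_apply', ih, map_mul]

lemma iter_map_add (i : ℕ) (x y : K) : (⇑σ)^[i] (x + y) = (⇑σ)^[i] x + (⇑σ)^[i] y := by
  induction i generalizing x y with
  | zero => simp
  | succ n ih => simp [Function.iterate_succ_apply', ih, map_add]

lemma iter_map_zero (i : ℕ) : (⇑σ)^[i] (0 : K) = 0 := by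
  induction i with
  | zero => simp
  | succ n ih => simp [Function.iterate_succ_apply', ih]

lemma iter_map_one (i : ℕ) : (⇑σ)^[i] (1 : K) = 1 := by
  induction i with
  | zero => simp
  | succ n ih => simp [Function.iterate_succ_apply', ih]

lemma iter_ne_zero (i : ℕ) {x : K} (hx : x ≠ 0) : (⇑σ)^[i] x ≠ 0 := by
  induction i with
  | zero => simpa
  | succ n ih => simp [Function.iterate_succ_apply']; exact fun h => ih (by simpa using h)

/-- twisted multiplication on polynomials: `(a t^i)(b t^j) = a σ^i(b) t^{i+j}`. -/
noncomputable def tmul (p q : Polynomial K) : Polynomial K :=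
  p.sum fun i c => q.sum fun j d => monomial (i + j) (c * (⇑σ)^[i] d)

lemma tmul_monomial (i j : ℕ) (c d : K) :
    tmul σ (monomial i c) (monomial j d) = monomial (i + j) (c * (⇑σ)^[i] d) := by
  unfold tmul
  rw [Polynomial.sum_monomial_index, Polynomial.sum_monomial_index]
  · simp [iter_map_zero]
  · rw [Polynomial.sum_monomial_index] <;> simp [iter_map_zero]

lemma tmul_zero_left (q : Polynomial K) : tmul σ 0 q = 0 := by
  unfold tmul; simp [Polynomial.sum_zero_index, Polynomial.sum]

lemma tmul_zero_right (p : Polynomial K) : tmul σ p 0 = 0 := by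
  unfold tmul; simp [Polynomial.sum_zero_index, Polynomial.sum]

lemma tmul_add_left (p p' q : Polynomial K) :
    tmul σ (p + p') q = tmul σ p q + tmul σ p' q := by
  unfold tmul
  rw [Polynomial.sum_add_index]
  · intro i; simp [Polynomial.sum_zero_index, iter_map_zero, Polynomial.sum]
  · intro i c c'
    rw [← Polynomial.sum_add]
    congr 1; funext j d
    rw [add_mul, ← (monomial _).map_add]

lemma tmul_add_right (p q q' : Polynomial K) :
    tmul σ p (q + q') = tmul σ p q + tmul σ p q' := by
  unfold tmul
  rw [← Polynomial.sum_add]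
  congr 1; funext i c
  rw [Polynomial.sum_add_index]
  · intro j; simp [iter_map_zero]
  · intro j d d'
    rw [iter_map_add, mul_add, ← (monomial _).map_add]

lemma tmul_assoc (p q r : Polynomial K) :
    tmul σ (tmul σ p q) r = tmul σ p (tmul σ q r) := by
  induction p using Polynomial.induction_on' with
  | add p p' hp hp' => rw [tmul_add_left, tmul_add_left, tmul_add_left, hp, hp']
  | monomial i c =>
    induction q using Polynomial.induction_on' with
    | add q q' hq hq' =>
        rw [tmul_add_right, tmul_add_left, tmul_add_left, tmul_add_right, hq, hq']
    | monomial j d =>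
      induction r using Polynomial.induction_on' with
      | add r r' hr hr' => rw [tmul_add_right, tmul_add_right, tmul_add_right, hr, hr']
      | monomial l e =>
        rw [tmul_monomial, tmul_monomial, tmul_monomial, tmul_monomial]
        rw [add_assoc, mul_assoc, iter_map_mul, Function.iterate_add_apply]

lemma tmul_sum_left {α : Type*} [DecidableEq α] (s : Finset α) (F : α → Polynomial K) (q : Polynomial K) :
    tmul σ (∑ i ∈ s, F i) q = ∑ i ∈ s, tmul σ (F i) q := by
  induction s using Finset.induction_on with
  | empty => simp [tmul_zero_left]
  | insert _ _ h ih => rw [Finset.sum_insert h, Finset.sum_insert h, tmul_add_left, ih]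

lemma tmul_sum_right {α : Type*} [DecidableEq α] (s : Finset α) (p : Polynomial K) (F : α → Polynomial K) :
    tmul σ p (∑ i ∈ s, F i) = ∑ i ∈ s, tmul σ p (F i) := by
  induction s using Finset.induction_on with
  | empty => simp [tmul_zero_right]
  | insert _ _ h ih => rw [Finset.sum_insert h, Finset.sum_insert h, tmul_add_right, ih]

lemma tmul_sub_right (p q q' : Polynomial K) :
    tmul σ p (q - q') = tmul σ p q - tmul σ p q' := by
  have h := tmul_add_right σ p (q - q') q'
  rw [sub_add_cancel] at h
  rw [h]; ring

lemma tmul_sub_left (p p' q : Polynomial K) :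
    tmul σ (p - p') q = tmul σ p q - tmul σ p' q := by
  have h := tmul_add_left σ (p - p') p' q
  rw [sub_add_cancel] at h
  rw [h]; ring

variable {K : Type*} [Field K]

/-- the basis vector `t^s` (zero if `s ≥ m`). -/
noncomputable def evec (K : Type*) [Field K] (m : ℕ) (s : ℕ) : Fin m → K :=
  fun i => if (i : ℕ) = s then 1 else 0

lemma evec_of_ge {m s : ℕ} (h : m ≤ s) : evec K m s = 0 := by
  funext i; simp [evec]; omega

lemma tred_lt {σ : K → K} {m : ℕ} {a : Fin m → K} {s : ℕ} (h : s < m) :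
    tred σ m a s = evec K m s := by
  rw [tred, dif_pos h]; rfl

lemma tred_ge {σ : K → K} {m : ℕ} {a : Fin m → K} {s : ℕ} (h : m ≤ s) :
    tred σ m a s = ∑ i : Fin m, σ^[s - m] (a i) • tred σ m a (s - m + (i : ℕ)) := by
  rw [tred, dif_neg (by omega)]

lemma sum_smul_evec {m : ℕ} (v : Fin m → K) :
    (∑ j : Fin m, v j • evec K m (j : ℕ)) = v := by
  funext i
  rw [Finset.sum_apply]
  rw [Finset.sum_eq_single i]
  · simp [evec]
  · intro j _ hj
    simp [evec, Pi.smul_apply]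
    intro h; exact absurd (Fin.ext h.symm) hj
  · intro h; exact absurd (Finset.mem_univ i) h

lemma tred_m {σ : K → K} {m : ℕ} (a : Fin m → K) : tred σ m a m = a := by
  rw [tred_ge (le_refl m)]
  have : ∀ i : Fin m, σ^[m - m] (a i) • tred σ m a (m - m + (i : ℕ)) = a i • evec K m i := by
    intro i
    rw [Nat.sub_self]
    simp only [Function.iterate_zero, id_eq, Nat.zero_add]
    rw [tred_lt i.isLt]
  rw [Finset.sum_congr rfl (fun i _ => this i), sum_smul_evec]

/-- reduction of a polynomial mod `f`, to a coefficient vector. -/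
noncomputable def pred (σ : K → K) {m : ℕ} (a : Fin m → K) (p : Polynomial K) :
    Fin m → K :=
  p.sum fun s c => c • tred σ m a s

lemma pred_monomial (σ : K → K) {m : ℕ} (a : Fin m → K) (s : ℕ) (c : K) :
    pred σ a (monomial s c) = c • tred σ m a s := by
  unfold pred
  rw [Polynomial.sum_monomial_index]
  simp

lemma pred_zero (σ : K → K) {m : ℕ} (a : Fin m → K) : pred σ a 0 = 0 := by
  unfold pred; simp [Polynomial.sum_zero_index]

lemma pred_add (σ : K → K) {m : ℕ} (a : Fin m → K) (p q : Polynomial K) :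
    pred σ a (p + q) = pred σ a p + pred σ a q := by
  unfold pred
  rw [Polynomial.sum_add_index]
  · intro s; simp
  · intro s c d; rw [add_smul]

lemma pred_sub (σ : K → K) {m : ℕ} (a : Fin m → K) (p q : Polynomial K) :
    pred σ a (p - q) = pred σ a p - pred σ a q := by
  have h := pred_add σ a (p - q) q
  rw [sub_add_cancel] at h
  rw [h]; abel

lemma pred_sum (σ : K → K) {m : ℕ} (a : Fin m → K) {α : Type*} [DecidableEq α]
    (s : Finset α) (F : α → Polynomial K) :
    pred σ a (∑ i ∈ s, F i) = ∑ i ∈ s, pred σ a (F i) := by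
  induction s using Finset.induction_on with
  | empty => simp [pred_zero]
  | insert _ _ h ih => rw [Finset.sum_insert h, Finset.sum_insert h, pred_add, ih]

/-- the polynomial with coefficient vector `x`. -/
noncomputable def tp {m : ℕ} (x : Fin m → K) : Polynomial K :=
  ∑ i : Fin m, monomial (i : ℕ) (x i)

lemma tp_add {m : ℕ} (x y : Fin m → K) : tp (x + y) = tp x + tp y := by
  unfold tp
  rw [← Finset.sum_add_distrib]
  congr 1; funext i; rw [Pi.add_apply, (monomial _).map_add]

lemma tp_zero {m : ℕ} : tp (0 : Fin m → K) = 0 := by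
  unfold tp; simp

lemma tp_sub {m : ℕ} (x y : Fin m → K) : tp (x - y) = tp x - tp y := by
  have h := tp_add (x - y) y
  rw [sub_add_cancel] at h
  rw [h]; ring

lemma pred_tp (σ : K → K) {m : ℕ} (a : Fin m → K) (x : Fin m → K) :
    pred σ a (tp x) = x := by
  unfold tp
  rw [pred_sum]
  have : ∀ i : Fin m, pred σ a (monomial (i : ℕ) (x i)) = x i • evec K m i := by
    intro i; rw [pred_monomial, tred_lt i.isLt]
  rw [Finset.sum_congr rfl (fun i _ => this i), sum_smul_evec]

/- ===== stage 3: division with remainder ===== -/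

/-- the polynomial `f = t^m - Σ a_i t^i`. -/
noncomputable def fpoly {m : ℕ} (a : Fin m → K) : Polynomial K :=
  monomial m 1 - tp a

lemma tmul_tp_right (σ : K ≃+* K) {m : ℕ} (s : ℕ) (c : K) (y : Fin m → K) :
    tmul σ (monomial s c) (tp y) =
      ∑ j : Fin m, monomial (s + (j : ℕ)) (c * (⇑σ)^[s] (y j)) := by
  unfold tp
  rw [tmul_sum_right]
  exact Finset.sum_congr rfl fun j _ => tmul_monomial σ s (j : ℕ) c (y j)

lemma tp_smul_evec {m : ℕ} {s : ℕ} (h : s < m) (c : K) :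
    tp (c • evec K m s) = monomial s c := by
  unfold tp
  rw [Finset.sum_eq_single (⟨s, h⟩ : Fin m)]
  · simp [evec]
  · intro j _ hj
    have : (j : ℕ) ≠ s := fun hc => hj (Fin.ext hc)
    simp [evec, this]
  · intro h'; exact absurd (Finset.mem_univ _) h'

lemma pred_tmul_fpoly (σ : K ≃+* K) {m : ℕ} (a : Fin m → K) (p : Polynomial K) :
    pred (⇑σ) a (tmul σ p (fpoly a)) = 0 := by
  induction p using Polynomial.induction_on' with
  | add p q hp hq => rw [tmul_add_left, pred_add, hp, hq, add_zero]
  | monomial s c =>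
    unfold fpoly
    rw [tmul_sub_right, pred_sub, tmul_monomial, tmul_tp_right, pred_sum, pred_monomial]
    rw [iter_map_one, mul_one, tred_ge (by omega : m ≤ s + m)]
    have harith : s + m - m = s := by omega
    rw [harith, Finset.smul_sum]
    rw [sub_eq_zero]
    refine Finset.sum_congr rfl fun i _ => ?_
    rw [pred_monomial, smul_smul]
lemma exists_div_aux (σ : K ≃+* K) {m : ℕ} (hm : 0 < m) (a : Fin m → K) (s : ℕ) :
    ∀ c : K, ∃ q, monomial s c = tmul σ q (fpoly a) + tp (pred (⇑σ) a (monomial s c)) := by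
  induction s using Nat.strong_induction_on with
  | _ s IH =>
    intro c
    by_cases h : s < m
    · refine ⟨0, ?_⟩
      rw [tmul_zero_left, zero_add, pred_monomial, tred_lt h, tp_smul_evec h]
    · push_neg at h
      set p' : Polynomial K :=
        ∑ i : Fin m, monomial (s - m + (i : ℕ)) (c * (⇑σ)^[s - m] (a i)) with hp'
      have h1 : monomial s c = tmul σ (monomial (s - m) c) (fpoly a) + p' := by
        unfold fpoly
        rw [tmul_sub_right, tmul_monomial, tmul_tp_right, iter_map_one, mul_one]
        have : s - m + m = s := by omega
        rw [this, ← hp', sub_add_cancel]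
      have h2 : pred (⇑σ) a (monomial s c) = pred (⇑σ) a p' := by
        rw [pred_monomial, tred_ge h, hp', pred_sum, Finset.smul_sum]
        refine Finset.sum_congr rfl fun i _ => ?_
        rw [pred_monomial, smul_smul]
      -- closure of the division property under sums, applied to p'
      have hP : ∃ q', p' = tmul σ q' (fpoly a) + tp (pred (⇑σ) a p') := by
        rw [hp']
        clear h1 h2 hp'
        induction (Finset.univ : Finset (Fin m)) using Finset.induction_on with
        | empty =>
          refine ⟨0, ?_⟩
          simp [tmul_zero_left, pred_zero, tp_zero]
        | insert i0 t hnotmem ih =>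
          obtain ⟨q1, hq1⟩ := ih
          obtain ⟨q2, hq2⟩ := IH (s - m + (i0 : ℕ)) (by omega) (c * (⇑σ)^[s - m] (a i0))
          refine ⟨q2 + q1, ?_⟩
          rw [Finset.sum_insert hnotmem, pred_add, pred_sum, tp_add, tmul_add_left]
          rw [pred_monomial] at hq2
          rw [pred_monomial]
          calc monomial (s - m + (i0:ℕ)) (c * (⇑σ)^[s-m] (a i0)) + ∑ x ∈ t, monomial (s - m + (x:ℕ)) (c * (⇑σ)^[s-m] (a x))
              = (tmul σ q2 (fpoly a) + tp ((c * (⇑σ)^[s-m] (a i0)) • tred (⇑σ) m a (s - m + (i0:ℕ)))) + (tmul σ q1 (fpoly a) + tp (pred (⇑σ) a (∑ x ∈ t, monomial (s - m + (x:ℕ)) (c * (⇑σ)^[s-m] (a x))))) := by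
                rw [← hq2, ← hq1]
            _ = _ := by rw [pred_sum]; ring
      obtain ⟨q', hq'⟩ := hP
      refine ⟨monomial (s - m) c + q', ?_⟩
      rw [tmul_add_left, h2]
      calc monomial s c = tmul σ (monomial (s - m) c) (fpoly a) + p' := h1
        _ = tmul σ (monomial (s - m) c) (fpoly a) + (tmul σ q' (fpoly a) + tp (pred (⇑σ) a p')) := by rw [← hq']
        _ = _ := by ring

lemma exists_div (σ : K ≃+* K) {m : ℕ} (hm : 0 < m) (a : Fin m → K) (p : Polynomial K) :
    ∃ q, p = tmul σ q (fpoly a) + tp (pred (⇑σ) a p) := by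
  induction p using Polynomial.induction_on' with
  | add p p' hp hp' =>
    obtain ⟨q1, h1⟩ := hp
    obtain ⟨q2, h2⟩ := hp'
    refine ⟨q1 + q2, ?_⟩
    rw [tmul_add_left, pred_add, tp_add]
    calc p + p' = (tmul σ q1 (fpoly a) + tp (pred (⇑σ) a p)) + (tmul σ q2 (fpoly a) + tp (pred (⇑σ) a p')) := by rw [← h1, ← h2]
      _ = _ := by ring
  | monomial s c => exact exists_div_aux σ hm a s c

/- ===== stage 4: the associator formula ===== -/

lemma pmul_eq (σ : K ≃+* K) {m : ℕ} (a : Fin m → K) (x y : Fin m → K) :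
    pmul (⇑σ) a x y = pred (⇑σ) a (tmul σ (tp x) (tp y)) := by
  show _ = pred (⇑σ) a (tmul σ (∑ i : Fin m, monomial (i : ℕ) (x i)) (tp y))
  rw [tmul_sum_left, pred_sum]
  unfold pmul
  refine Finset.sum_congr rfl fun i _ => ?_
  rw [tmul_tp_right, pred_sum]
  exact Finset.sum_congr rfl fun j _ => (pred_monomial _ _ _ _).symm

lemma pred_tmul_reduce_right (σ : K ≃+* K) {m : ℕ} (hm : 0 < m) (a : Fin m → K)
    (p q : Polynomial K) :
    pred (⇑σ) a (tmul σ p q) = pred (⇑σ) a (tmul σ p (tp (pred (⇑σ) a q))) := by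
  obtain ⟨q', h⟩ := exists_div σ hm a q
  conv_lhs => rw [h]
  rw [tmul_add_right, pred_add, ← tmul_assoc, pred_tmul_fpoly, zero_add]

/-- the reduction of `f·z` mod `f`; `f` is invariant iff this vanishes identically. -/
noncomputable def fres (σ : K ≃+* K) {m : ℕ} (a : Fin m → K) (z : Fin m → K) : Fin m → K :=
  pred (⇑σ) a (tmul σ (fpoly a) (tp z))

lemma assoc_formula (σ : K ≃+* K) {m : ℕ} (hm : 0 < m) (a : Fin m → K)
    (x y z : Fin m → K) (q : Polynomial K)
    (hq : tmul σ (tp x) (tp y) = tmul σ q (fpoly a) + tp (pmul (⇑σ) a x y)) :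
    pmul (⇑σ) a (pmul (⇑σ) a x y) z =
      pmul (⇑σ) a x (pmul (⇑σ) a y z) - pred (⇑σ) a (tmul σ q (tp (fres σ a z))) := by
  have htp : tp (pmul (⇑σ) a x y) = tmul σ (tp x) (tp y) - tmul σ q (fpoly a) := by
    rw [hq]; ring
  have hleft : pmul (⇑σ) a (pmul (⇑σ) a x y) z =
      pred (⇑σ) a (tmul σ (tmul σ (tp x) (tp y)) (tp z)) -
        pred (⇑σ) a (tmul σ q (tp (fres σ a z))) := by
    rw [pmul_eq, htp, tmul_sub_left, pred_sub]
    congr 1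
    rw [tmul_assoc]
    rw [pred_tmul_reduce_right σ hm a q (tmul σ (fpoly a) (tp z))]
    rfl
  have hright : pmul (⇑σ) a x (pmul (⇑σ) a y z) =
      pred (⇑σ) a (tmul σ (tmul σ (tp x) (tp y)) (tp z)) := by
    rw [pmul_eq σ a x, pmul_eq σ a y]
    rw [← pred_tmul_reduce_right σ hm a (tp x) (tmul σ (tp y) (tp z)), tmul_assoc]
  rw [hleft, hright]

lemma exists_fres_ne (σ : K ≃+* K) {m : ℕ} (hm : 0 < m) (a : Fin m → K)
    (hna : ¬ PAssoc (⇑σ) a) : ∃ z, fres σ a z ≠ 0 := by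
  by_contra hall
  push_neg at hall
  apply hna
  intro x y z
  obtain ⟨q, hq⟩ := exists_div σ hm a (tmul σ (tp x) (tp y))
  rw [← pmul_eq] at hq
  rw [assoc_formula σ hm a x y z q hq, hall z, tp_zero, tmul_zero_right, pred_zero, sub_zero]

/- ===== stage 5: basic pmul lemmas ===== -/

lemma tmul_C_left (σ : K ≃+* K) (c : K) (p : Polynomial K) :
    tmul σ (monomial 0 c) p = c • p := by
  induction p using Polynomial.induction_on' with
  | add p q hp hq => rw [tmul_add_right, hp, hq, smul_add]
  | monomial s e => rw [tmul_monomial, smul_monomial, zero_add]; rfl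

lemma pred_smul (σ : K → K) {m : ℕ} (a : Fin m → K) (c : K) (p : Polynomial K) :
    pred σ a (c • p) = c • pred σ a p := by
  induction p using Polynomial.induction_on' with
  | add p q hp hq => rw [smul_add, pred_add, pred_add, hp, hq, smul_add]
  | monomial s e => rw [smul_monomial, pred_monomial, pred_monomial, smul_smul, smul_eq_mul]

lemma tp_sum {m : ℕ} {α : Type*} [DecidableEq α] (s : Finset α) (F : α → Fin m → K) :
    tp (∑ i ∈ s, F i) = ∑ i ∈ s, tp (F i) := by
  induction s using Finset.induction_on with
  | empty => simp [tp_zero]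
  | insert _ _ h ih => rw [Finset.sum_insert h, Finset.sum_insert h, tp_add, ih]

lemma tp_smul {m : ℕ} (c : K) (v : Fin m → K) :
    tp (c • v) = ∑ i : Fin m, monomial (i : ℕ) (c * v i) := by
  unfold tp; rfl

lemma tp_evec {m s : ℕ} (h : s < m) : tp (evec K m s) = monomial s (1 : K) := by
  rw [← one_smul K (evec K m s), tp_smul_evec h]

lemma pmul_add_left (σ : K → K) {m : ℕ} (a : Fin m → K) (x x' y : Fin m → K) :
    pmul σ a (x + x') y = pmul σ a x y + pmul σ a x' y := by
  unfold pmul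
  rw [← Finset.sum_add_distrib]
  refine Finset.sum_congr rfl fun i _ => ?_
  rw [← Finset.sum_add_distrib]
  refine Finset.sum_congr rfl fun j _ => ?_
  rw [Pi.add_apply, add_mul, add_smul]

lemma pmul_smul_left (σ : K → K) {m : ℕ} (a : Fin m → K) (c : K) (x y : Fin m → K) :
    pmul σ a (c • x) y = c • pmul σ a x y := by
  unfold pmul
  rw [Finset.smul_sum]
  refine Finset.sum_congr rfl fun i _ => ?_
  rw [Finset.smul_sum]
  refine Finset.sum_congr rfl fun j _ => ?_
  rw [Pi.smul_apply, smul_eq_mul, mul_assoc, ← smul_smul]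

lemma fin_zero_coe {m : ℕ} (hm : 0 < m) (i : Fin m) (h : (i : ℕ) = 0) :
    i = (⟨0, hm⟩ : Fin m) := Fin.ext h

lemma pmul_iota_left (σ : K ≃+* K) {m : ℕ} (hm : 0 < m) (a : Fin m → K) (c : K)
    (y : Fin m → K) : pmul (⇑σ) a (iota K m c) y = c • y := by
  unfold pmul
  rw [Finset.sum_eq_single (⟨0, hm⟩ : Fin m)]
  · have : ∀ j : Fin m, (iota K m c ⟨0, hm⟩ * (⇑σ)^[((⟨0, hm⟩ : Fin m) : ℕ)] (y j)) •
        tred (⇑σ) m a (((⟨0, hm⟩ : Fin m) : ℕ) + (j : ℕ)) = (c * y j) • evec K m (j : ℕ) := by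
      intro j
      have h0 : (((⟨0, hm⟩ : Fin m)) : ℕ) = 0 := rfl
      rw [h0]
      simp only [Function.iterate_zero, id_eq, Nat.zero_add]
      rw [tred_lt j.isLt]
      simp [iota]
    rw [Finset.sum_congr rfl (fun j _ => this j)]
    have : ∀ j : Fin m, (c * y j) • evec K m (j : ℕ) = (c • y) j • evec K m (j : ℕ) := by
      intro j; rfl
    rw [Finset.sum_congr rfl (fun j _ => this j), sum_smul_evec]
  · intro i _ hi
    have : iota K m c i = 0 := by
      simp [iota]; intro h; exact absurd (fin_zero_coe hm i h) hi
    simp [this]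
  · intro h; exact absurd (Finset.mem_univ _) h

lemma pmul_iota_right (σ : K ≃+* K) {m : ℕ} (hm : 0 < m) (a : Fin m → K) (c : K)
    (x : Fin m → K) : pmul (⇑σ) a x (iota K m c) = fun i => x i * (⇑σ)^[(i : ℕ)] c := by
  unfold pmul
  have hterm : ∀ i : Fin m,
      (∑ j : Fin m, (x i * (⇑σ)^[(i : ℕ)] (iota K m c j)) • tred (⇑σ) m a ((i : ℕ) + (j : ℕ)))
        = (x i * (⇑σ)^[(i : ℕ)] c) • evec K m (i : ℕ) := by
    intro i
    rw [Finset.sum_eq_single (⟨0, hm⟩ : Fin m)]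
    · have h0 : (((⟨0, hm⟩ : Fin m)) : ℕ) = 0 := rfl
      rw [h0, Nat.add_zero, tred_lt i.isLt]
      simp [iota]
    · intro j _ hj
      have : iota K m c j = 0 := by
        simp [iota]; intro h; exact absurd (fin_zero_coe hm j h) hj
      simp [this, iter_map_zero]
    · intro h; exact absurd (Finset.mem_univ _) h
  rw [Finset.sum_congr rfl (fun i _ => hterm i)]
  exact sum_smul_evec _

lemma pmul_tvec_left (σ : K ≃+* K) {m : ℕ} (hm : 2 ≤ m) (a : Fin m → K) (y : Fin m → K) :
    pmul (⇑σ) a (tvec K m) y = ∑ j : Fin m, σ (y j) • tred (⇑σ) m a (1 + (j : ℕ)) := by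
  unfold pmul
  rw [Finset.sum_eq_single (⟨1, by omega⟩ : Fin m)]
  · refine Finset.sum_congr rfl fun j _ => ?_
    have h1 : (((⟨1, by omega⟩ : Fin m)) : ℕ) = 1 := rfl
    rw [h1]
    simp [tvec, Function.iterate_one]
  · intro i _ hi
    have : tvec K m i = 0 := by
      simp [tvec]; intro h; exact absurd (Fin.ext h : i = ⟨1, by omega⟩) hi
    simp [this]
  · intro h; exact absurd (Finset.mem_univ _) h

/- ===== stage 6: left nucleus ===== -/

lemma tp_smul' {m : ℕ} (c : K) (v : Fin m → K) : tp (c • v) = c • tp v := by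
  unfold tp
  rw [Finset.smul_sum]
  refine Finset.sum_congr rfl fun i _ => ?_
  rw [Pi.smul_apply, smul_monomial, smul_eq_mul]

lemma nucl_coeffs (σ : K ≃+* K) {m : ℕ} (hm : 2 ≤ m) (a : Fin m → K)
    (hfres : ∃ z, fres σ a z ≠ 0) (x : Fin m → K)
    (hx : ∀ y z, pmul (⇑σ) a (pmul (⇑σ) a x y) z = pmul (⇑σ) a x (pmul (⇑σ) a y z)) :
    ∀ i : Fin m, (i : ℕ) ≠ 0 → x i = 0 := by
  by_contra hcon
  push_neg at hcon
  obtain ⟨i0, hi0ne, hi0x⟩ := hcon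
  classical
  set S := Finset.univ.filter (fun i : Fin m => x i ≠ 0) with hSdef
  have hS : i0 ∈ S := by simp [hSdef, hi0x]
  set d := S.max' ⟨i0, hS⟩ with hddef
  have hdS : d ∈ S := S.max'_mem _
  have hxd : x d ≠ 0 := by simpa [hSdef] using hdS
  have hled : i0 ≤ d := S.le_max' i0 hS
  have hd1 : 1 ≤ (d : ℕ) := by
    have h1 := (Fin.le_def).mp hled
    omega
  have hdm : (d : ℕ) < m := d.isLt
  have hgt : ∀ j : Fin m, d < j → x j = 0 := by
    intro j hj
    by_contra h
    exact absurd (S.le_max' j (by simp [hSdef, h])) (not_le.mpr hj)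
  obtain ⟨z0, hz0⟩ := hfres
  have hmd : m - (d : ℕ) < m := by omega
  set yv := evec K m (m - (d : ℕ)) with hyv
  set x' := Function.update x d 0 with hx'
  have hx'prop : ∀ i : Fin m, x' i = if i = d then 0 else x i := by
    intro i
    by_cases h : i = d <;> simp [hx', h]
  have hx'top : ∀ i : Fin m, m ≤ (i : ℕ) + (m - (d : ℕ)) → x' i = 0 := by
    intro i hi
    rw [hx'prop]
    by_cases h : i = d
    · rw [if_pos h]
    · rw [if_neg h]
      apply hgt
      rw [Fin.lt_def]
      have : (d : ℕ) ≤ (i : ℕ) := by omega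
      rcases lt_or_eq_of_le this with h' | h'
      · exact h'
      · exact absurd (Fin.ext h'.symm) h
  have hLHS : tmul σ (tp x) (tp yv) =
      ∑ i : Fin m, monomial ((i : ℕ) + (m - (d : ℕ))) (x i) := by
    rw [hyv, tp_evec hmd]
    show tmul σ (∑ i : Fin m, monomial (i : ℕ) (x i)) _ = _
    rw [tmul_sum_left]
    refine Finset.sum_congr rfl fun i _ => ?_
    rw [tmul_monomial, iter_map_one, mul_one]
  have harr : (d : ℕ) + (m - (d : ℕ)) = m := by omega
  have hsplit : (∑ i : Fin m, monomial ((i : ℕ) + (m - (d : ℕ))) (x i))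
      = (∑ i : Fin m, monomial ((i : ℕ) + (m - (d : ℕ))) (x' i)) + monomial m (x d) := by
    have hterm : ∀ i : Fin m, monomial ((i : ℕ) + (m - (d : ℕ))) (x i)
        = monomial ((i : ℕ) + (m - (d : ℕ))) (x' i)
          + (if i = d then monomial m (x d) else 0) := by
      intro i
      by_cases h : i = d
      · subst h
        rw [hx'prop, if_pos rfl, if_pos rfl, harr]
        simp
      · rw [hx'prop, if_neg h, if_neg h, add_zero]
    rw [Finset.sum_congr rfl (fun i _ => hterm i), Finset.sum_add_distrib,
      Finset.sum_ite_eq' Finset.univ d, if_pos (Finset.mem_univ d)]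
  have hpm : pmul (⇑σ) a x yv =
      (∑ i : Fin m, x' i • evec K m ((i : ℕ) + (m - (d : ℕ)))) + x d • a := by
    rw [pmul_eq σ a, hLHS, pred_sum]
    have hterm : ∀ i : Fin m, pred (⇑σ) a (monomial ((i : ℕ) + (m - (d : ℕ))) (x i))
        = x' i • evec K m ((i : ℕ) + (m - (d : ℕ))) + (if i = d then x d • a else 0) := by
      intro i
      rw [pred_monomial]
      rcases lt_trichotomy i d with h | h | h
      · have hlt : (i : ℕ) + (m - (d : ℕ)) < m := by
          have := (Fin.lt_def).mp h; omega
        rw [tred_lt hlt, hx'prop, if_neg (ne_of_lt h), if_neg (ne_of_lt h), add_zero]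
      · subst h
        rw [harr, tred_m, hx'prop, if_pos rfl, if_pos rfl, zero_smul, zero_add]
      · have hxi : x i = 0 := hgt i h
        rw [hxi, hx'prop, if_neg (ne_of_gt h), hxi, if_neg (ne_of_gt h), add_zero, zero_smul,
          zero_smul]
    rw [Finset.sum_congr rfl (fun i _ => hterm i), Finset.sum_add_distrib,
      Finset.sum_ite_eq' Finset.univ d, if_pos (Finset.mem_univ d)]
  have hq : tmul σ (tp x) (tp yv) =
      tmul σ (monomial 0 (x d)) (fpoly a) + tp (pmul (⇑σ) a x yv) := by
    have htpm : tp (pmul (⇑σ) a x yv)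
        = (∑ i : Fin m, monomial ((i : ℕ) + (m - (d : ℕ))) (x' i)) + x d • tp a := by
      rw [hpm, tp_add, tp_sum, tp_smul']
      congr 1
      refine Finset.sum_congr rfl fun i _ => ?_
      by_cases h : (i : ℕ) + (m - (d : ℕ)) < m
      · rw [tp_smul_evec h]
      · push_neg at h
        rw [hx'top i h]
        rw [evec_of_ge h]
        simp [tp_zero]
    rw [htpm, tmul_C_left, hLHS, hsplit]
    unfold fpoly
    rw [smul_sub]
    have : x d • (monomial m (1 : K)) = monomial m (x d) := by
      rw [smul_monomial, smul_eq_mul, mul_one]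
    rw [this]
    ring
  have hassoc := assoc_formula σ (by omega) a x yv z0 (monomial 0 (x d)) hq
  rw [hx yv z0] at hassoc
  have hzero : pred (⇑σ) a (tmul σ (monomial 0 (x d)) (tp (fres σ a z0))) = 0 :=
    sub_eq_self.mp hassoc.symm
  rw [tmul_C_left, pred_smul, pred_tp] at hzero
  rcases smul_eq_zero.mp hzero with h | h
  · exact hxd h
  · exact hz0 h

/- ===== stage 7: Hmap machinery ===== -/

/-- `P_i = Π_{l<i} σ^l(k)`. -/
noncomputable def Pp (σ : K → K) (k : K) (i : ℕ) : K := ∏ l ∈ Finset.range i, σ^[l] k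

lemma iter_map_prod (σ : K ≃+* K) (n : ℕ) {α : Type*} (s : Finset α) (F : α → K) :
    (⇑σ)^[n] (∏ l ∈ s, F l) = ∏ l ∈ s, (⇑σ)^[n] (F l) := by
  induction n with
  | zero => simp
  | succ n ih =>
    rw [Function.iterate_succ_apply', ih, map_prod]
    exact Finset.prod_congr rfl fun l _ => (Function.iterate_succ_apply' (⇑σ) n (F l)).symm

lemma Pp_ne_zero (σ : K ≃+* K) {k : K} (hk : k ≠ 0) (i : ℕ) : Pp (⇑σ) k i ≠ 0 := by
  unfold Pp
  exact Finset.prod_ne_zero_iff.mpr fun l _ => iter_ne_zero σ l hk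

lemma Pp_add (σ : K ≃+* K) (k : K) (i j : ℕ) :
    Pp (⇑σ) k (i + j) = Pp (⇑σ) k i * (⇑σ)^[i] (Pp (⇑σ) k j) := by
  unfold Pp
  rw [Finset.prod_range_add, iter_map_prod]
  congr 1
  refine Finset.prod_congr rfl fun l _ => ?_
  rw [← Function.iterate_add_apply]

lemma Pp_succ' (σ : K ≃+* K) (k : K) (s : ℕ) :
    Pp (⇑σ) k (s + 1) = σ (Pp (⇑σ) k s) * k := by
  unfold Pp
  rw [Finset.prod_range_succ']
  have : (⇑σ) (∏ l ∈ Finset.range s, (⇑σ)^[l] k) = ∏ l ∈ Finset.range s, (⇑σ)^[l + 1] k := by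
    rw [map_prod]
    exact Finset.prod_congr rfl fun l _ => (Function.iterate_succ_apply' (⇑σ) l k).symm
  rw [this]
  rfl

lemma tau_iter_comm (σ τ : K ≃+* K) (hc : ∀ x, σ (τ x) = τ (σ x)) (i : ℕ) (x : K) :
    τ ((⇑σ)^[i] x) = (⇑σ)^[i] (τ x) := by
  induction i with
  | zero => simp
  | succ n ih => rw [Function.iterate_succ_apply', Function.iterate_succ_apply', ← hc, ih]

/-- image of a polynomial under `Σ c_i t^i ↦ Σ τ(c_i) P_i t^i`. -/
noncomputable def phi (σ : K → K) (τ : K ≃+* K) (k : K) (p : Polynomial K) : Polynomial K :=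
  p.sum fun i c => monomial i (τ c * Pp σ k i)

lemma phi_monomial (σ : K → K) (τ : K ≃+* K) (k : K) (s : ℕ) (c : K) :
    phi σ τ k (monomial s c) = monomial s (τ c * Pp σ k s) := by
  unfold phi
  rw [Polynomial.sum_monomial_index]
  simp

lemma phi_add (σ : K → K) (τ : K ≃+* K) (k : K) (p q : Polynomial K) :
    phi σ τ k (p + q) = phi σ τ k p + phi σ τ k q := by
  unfold phi
  rw [Polynomial.sum_add_index]
  · intro s; simp
  · intro s c d; rw [map_add, add_mul, (monomial _).map_add]

lemma phi_tmul (σ τ : K ≃+* K) (hc : ∀ x, σ (τ x) = τ (σ x)) (k : K) (p q : Polynomial K) :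
    phi (⇑σ) τ k (tmul σ p q) = tmul σ (phi (⇑σ) τ k p) (phi (⇑σ) τ k q) := by
  induction p using Polynomial.induction_on' with
  | add p p' hp hp' => rw [tmul_add_left, phi_add, phi_add, tmul_add_left, hp, hp']
  | monomial i c =>
    induction q using Polynomial.induction_on' with
    | add q q' hq hq' => rw [tmul_add_right, phi_add, phi_add, tmul_add_right, hq, hq']
    | monomial j d =>
      rw [tmul_monomial, phi_monomial, phi_monomial, phi_monomial, tmul_monomial]
      congr 1
      rw [map_mul, tau_iter_comm σ τ hc, Pp_add, iter_map_mul]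
      ring

lemma phi_tp (σ : K → K) (τ : K ≃+* K) (k : K) {m : ℕ} (x : Fin m → K) :
    phi σ τ k (tp x) = tp (Hmap σ (⇑τ) k x) := by
  unfold tp
  rw [show phi σ τ k (∑ i : Fin m, monomial (i : ℕ) (x i))
      = ∑ i : Fin m, phi σ τ k (monomial (i : ℕ) (x i)) from ?_]
  · refine Finset.sum_congr rfl fun i _ => ?_
    rw [phi_monomial]
    rfl
  · induction (Finset.univ : Finset (Fin m)) using Finset.induction_on with
    | empty => simp [phi, Polynomial.sum_zero_index]
    | insert _ _ h ih => rw [Finset.sum_insert h, Finset.sum_insert h, phi_add, ih]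

lemma Hmap_add (σ : K → K) (τ : K ≃+* K) (k : K) {m : ℕ} (x y : Fin m → K) :
    Hmap σ (⇑τ) k (x + y) = Hmap σ (⇑τ) k x + Hmap σ (⇑τ) k y := by
  funext i
  show τ ((x + y) i) * _ = _
  rw [Pi.add_apply, map_add, add_mul]
  rfl

lemma Hmap_zero (σ : K → K) (τ : K ≃+* K) (k : K) {m : ℕ} :
    Hmap σ (⇑τ) k (0 : Fin m → K) = 0 := by
  funext i
  show τ 0 * _ = 0
  rw [map_zero, zero_mul]

lemma Hmap_smul (σ : K → K) (τ : K ≃+* K) (k : K) {m : ℕ} (c : K) (x : Fin m → K) :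
    Hmap σ (⇑τ) k (c • x) = τ c • Hmap σ (⇑τ) k x := by
  funext i
  show τ (c * x i) * _ = τ c * (τ (x i) * _)
  rw [map_mul, mul_assoc]

lemma Hmap_sum (σ : K → K) (τ : K ≃+* K) (k : K) {m : ℕ} {α : Type*} [DecidableEq α]
    (s : Finset α) (F : α → Fin m → K) :
    Hmap σ (⇑τ) k (∑ i ∈ s, F i) = ∑ i ∈ s, Hmap σ (⇑τ) k (F i) := by
  induction s using Finset.induction_on with
  | empty => simp [Hmap_zero]
  | insert _ _ h ih => rw [Finset.sum_insert h, Finset.sum_insert h, Hmap_add, ih]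

/- ===== stage 8: Hmap is an isomorphism ===== -/

lemma Pp_key (σ : K ≃+* K) (k : K) {m s i : ℕ} (hs : m ≤ s) (hi : i < m) :
    Pp (⇑σ) k (s - m + i) * (⇑σ)^[s - m] (∏ l ∈ Finset.Ico i m, (⇑σ)^[l] k)
      = Pp (⇑σ) k s := by
  have h1 : (∏ l ∈ Finset.Ico i m, (⇑σ)^[l] k)
      = ∏ l ∈ Finset.range (m - i), (⇑σ)^[i + l] k :=
    Finset.prod_Ico_eq_prod_range (fun l => (⇑σ)^[l] k) i m
  have h2 : (⇑σ)^[s - m] (∏ l ∈ Finset.range (m - i), (⇑σ)^[i + l] k)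
      = ∏ l ∈ Finset.range (m - i), (⇑σ)^[s - m + i + l] k := by
    rw [iter_map_prod]
    refine Finset.prod_congr rfl fun l _ => ?_
    rw [← Function.iterate_add_apply]
    congr 1
    omega
  have h3 : s = (s - m + i) + (m - i) := by omega
  rw [h1, h2]
  conv_rhs => rw [h3, Pp_add σ k (s - m + i) (m - i)]
  congr 1
  unfold Pp
  rw [iter_map_prod σ (s - m + i) (Finset.range (m - i)) (fun l => (⇑σ)^[l] k)]
  refine Finset.prod_congr rfl fun l _ => ?_
  rw [← Function.iterate_add_apply]

lemma Htred (σ τ : K ≃+* K) (hc : ∀ x, σ (τ x) = τ (σ x)) (k : K) {m : ℕ} (a b : Fin m → K)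
    (hcond : ∀ i : Fin m, τ (a i) = (∏ l ∈ Finset.Ico (i : ℕ) m, (⇑σ)^[l] k) * b i)
    (s : ℕ) :
    Hmap (⇑σ) (⇑τ) k (tred (⇑σ) m a s) = Pp (⇑σ) k s • tred (⇑σ) m b s := by
  induction s using Nat.strong_induction_on with
  | _ s IH =>
    by_cases h : s < m
    · rw [tred_lt h, tred_lt h]
      funext i
      show τ (evec K m s i) * Pp (⇑σ) k (i : ℕ) = Pp (⇑σ) k s * evec K m s i
      unfold evec
      by_cases hi : (i : ℕ) = s
      · rw [if_pos hi, map_one, one_mul, mul_one, hi]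
      · rw [if_neg hi, map_zero, zero_mul, mul_zero]
    · push_neg at h
      rw [tred_ge h, tred_ge h, Hmap_sum, Finset.smul_sum]
      refine Finset.sum_congr rfl fun i _ => ?_
      rw [Hmap_smul, IH (s - m + (i : ℕ)) (by have := i.isLt; omega), smul_smul, smul_smul]
      congr 1
      rw [tau_iter_comm σ τ hc, hcond i, iter_map_mul, ← Pp_key σ k h i.isLt]
      ring

lemma Hmap_pred (σ τ : K ≃+* K) (hc : ∀ x, σ (τ x) = τ (σ x)) (k : K) {m : ℕ}
    (a b : Fin m → K)
    (hcond : ∀ i : Fin m, τ (a i) = (∏ l ∈ Finset.Ico (i : ℕ) m, (⇑σ)^[l] k) * b i)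
    (p : Polynomial K) :
    Hmap (⇑σ) (⇑τ) k (pred (⇑σ) a p) = pred (⇑σ) b (phi (⇑σ) τ k p) := by
  induction p using Polynomial.induction_on' with
  | add p q hp hq => rw [pred_add, Hmap_add, phi_add, pred_add, hp, hq]
  | monomial s c =>
    rw [pred_monomial, phi_monomial, pred_monomial, Hmap_smul,
      Htred σ τ hc k a b hcond s, smul_smul]

lemma Hmap_pmul (σ τ : K ≃+* K) (hc : ∀ x, σ (τ x) = τ (σ x)) (k : K) {m : ℕ}
    (a b : Fin m → K)
    (hcond : ∀ i : Fin m, τ (a i) = (∏ l ∈ Finset.Ico (i : ℕ) m, (⇑σ)^[l] k) * b i)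
    (x y : Fin m → K) :
    Hmap (⇑σ) (⇑τ) k (pmul (⇑σ) a x y)
      = pmul (⇑σ) b (Hmap (⇑σ) (⇑τ) k x) (Hmap (⇑σ) (⇑τ) k y) := by
  rw [pmul_eq σ a, Hmap_pred σ τ hc k a b hcond, phi_tmul σ τ hc, phi_tp, phi_tp,
    ← pmul_eq σ b]

lemma Hmap_bijective (σ τ : K ≃+* K) {k : K} (hk : k ≠ 0) {m : ℕ} :
    Function.Bijective (Hmap (⇑σ) (⇑τ) k : (Fin m → K) → (Fin m → K)) := by
  rw [Function.bijective_iff_has_inverse]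
  refine ⟨fun y i => τ.symm (y i * (Pp (⇑σ) k (i : ℕ))⁻¹), fun x => ?_, fun y => ?_⟩
  · funext i
    show τ.symm (τ (x i) * Pp (⇑σ) k (i : ℕ) * (Pp (⇑σ) k (i : ℕ))⁻¹) = x i
    rw [mul_assoc, mul_inv_cancel₀ (Pp_ne_zero σ hk _), mul_one, RingEquiv.symm_apply_apply]
  · funext i
    show τ (τ.symm (y i * (Pp (⇑σ) k (i : ℕ))⁻¹)) * Pp (⇑σ) k (i : ℕ) = y i
    rw [RingEquiv.apply_symm_apply, mul_assoc, inv_mul_cancel₀ (Pp_ne_zero σ hk _), mul_one]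

lemma Hmap_one (σ : K → K) (τ : K ≃+* K) (k : K) {m : ℕ} :
    Hmap σ (⇑τ) k (pone K m) = pone K m := by
  funext i
  show τ (pone K m i) * Pp σ k (i : ℕ) = pone K m i
  unfold pone
  by_cases hi : (i : ℕ) = 0
  · rw [if_pos hi, map_one, one_mul, hi]
    unfold Pp
    rw [Finset.prod_range_zero]
  · rw [if_neg hi, map_zero, zero_mul]

/-- Part 2 of the theorem: every admissible pair `(τ, k)` yields an isomorphism. -/
lemma Hmap_iso (σ τ : K ≃+* K) (hfix : ∀ c : K, σ c = c → τ c = c)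
    (hc : ∀ x, σ (τ x) = τ (σ x)) {k : K} (hk : k ≠ 0) {m : ℕ} (a b : Fin m → K)
    (hcond : ∀ i : Fin m, τ (a i) = (∏ l ∈ Finset.Ico (i : ℕ) m, (⇑σ)^[l] k) * b i) :
    IsPetitIso (⇑σ) a b (Hmap (⇑σ) (⇑τ) k) := by
  refine ⟨Hmap_bijective σ τ hk, Hmap_add (⇑σ) τ k, ?_, Hmap_pmul σ τ hc k a b hcond,
    Hmap_one (⇑σ) τ k⟩
  intro c hcfix x
  rw [Hmap_smul, hfix c hcfix]

/- ===== stage 9: small computation lemmas ===== -/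

lemma iota_add' {m : ℕ} (c d : K) : iota K m (c + d) = iota K m c + iota K m d := by
  funext i
  by_cases h : (i : ℕ) = 0 <;> simp [iota, h]

lemma smul_iota {m : ℕ} (c d : K) : c • iota K m d = iota K m (c * d) := by
  funext i
  by_cases h : (i : ℕ) = 0 <;> simp [iota, h]

lemma smul_pone {m : ℕ} (c : K) : c • pone K m = iota K m c := by
  funext i
  by_cases h : (i : ℕ) = 0 <;> simp [iota, pone, h]

lemma pone_eq_iota_one {m : ℕ} : pone K m = iota K m 1 := rfl

lemma evec_zero_eq_pone {m : ℕ} : evec K m 0 = pone K m := rfl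

lemma evec_one_eq_tvec {m : ℕ} : evec K m 1 = tvec K m := rfl

lemma pmul_tvec_smul (σ : K ≃+* K) {m : ℕ} (hm : 2 ≤ m) (a : Fin m → K) (e : K)
    (y : Fin m → K) :
    pmul (⇑σ) a (tvec K m) (e • y) = σ e • pmul (⇑σ) a (tvec K m) y := by
  rw [pmul_tvec_left σ hm, pmul_tvec_left σ hm, Finset.smul_sum]
  refine Finset.sum_congr rfl fun j _ => ?_
  rw [Pi.smul_apply, smul_eq_mul, map_mul, smul_smul]

lemma pmul_tvec_evec (σ : K ≃+* K) {m : ℕ} (hm : 2 ≤ m) (a : Fin m → K) {s : ℕ}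
    (hs : s + 1 < m) :
    pmul (⇑σ) a (tvec K m) (evec K m s) = evec K m (s + 1) := by
  rw [pmul_tvec_left σ hm]
  rw [Finset.sum_eq_single (⟨s, by omega⟩ : Fin m)]
  · show σ (if (s : ℕ) = s then 1 else 0) • tred (⇑σ) m a (1 + s) = _
    rw [if_pos rfl, map_one, one_smul, tred_lt (by omega : 1 + s < m), Nat.add_comm 1 s]
  · intro j _ hj
    have : (j : ℕ) ≠ s := fun h => hj (Fin.ext h)
    show σ (if (j : ℕ) = s then 1 else 0) • tred (⇑σ) m a (1 + (j : ℕ)) = 0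
    rw [if_neg this, map_zero, zero_smul]
  · intro h; exact absurd (Finset.mem_univ _) h

lemma pmul_tvec_top (σ : K ≃+* K) {m : ℕ} (hm : 2 ≤ m) (a : Fin m → K) :
    pmul (⇑σ) a (tvec K m) (evec K m (m - 1)) = a := by
  rw [pmul_tvec_left σ hm]
  rw [Finset.sum_eq_single (⟨m - 1, by omega⟩ : Fin m)]
  · show σ (if (m - 1 : ℕ) = m - 1 then 1 else 0) • tred (⇑σ) m a (1 + (m - 1)) = _
    rw [if_pos rfl, map_one, one_smul]
    have : 1 + (m - 1) = m := by omega
    rw [this, tred_m]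
  · intro j _ hj
    have : (j : ℕ) ≠ m - 1 := fun h => hj (Fin.ext h)
    show σ (if (j : ℕ) = m - 1 then 1 else 0) • tred (⇑σ) m a (1 + (j : ℕ)) = 0
    rw [if_neg this, map_zero, zero_smul]
  · intro h; exact absurd (Finset.mem_univ _) h

lemma pmul_tvec_iota (σ : K ≃+* K) {m : ℕ} (hm : 2 ≤ m) (a : Fin m → K) (z : K) :
    pmul (⇑σ) a (tvec K m) (iota K m z) = σ z • tvec K m := by
  rw [pmul_tvec_left σ hm]
  rw [Finset.sum_eq_single (⟨0, by omega⟩ : Fin m)]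
  · show σ (iota K m z ⟨0, by omega⟩) • tred (⇑σ) m a (1 + 0) = _
    have h0 : iota K m z ⟨0, by omega⟩ = z := rfl
    rw [h0, tred_lt (by omega : 1 + 0 < m)]
    congr 1
  · intro j _ hj
    have : iota K m z j = 0 := by
      simp [iota]
      intro h; exact absurd (fin_zero_coe (by omega) j h) hj
    rw [this, map_zero, zero_smul]
  · intro h; exact absurd (Finset.mem_univ _) h

end Aux

/-- **Theorem 7.1.** Suppose `σ` has order `n ≥ m − 1` (possibly infinite;
equivalently `σ^j ≠ id` for `0 < j < m − 1`) and commutes with every `τ ∈ Aut_F(K)`,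
and let `f(t) = t^m − Σ a_i t^i`, `g(t) = t^m − Σ b_i t^i` both be not invariant.
Then `S_f ≅ S_g` iff there are `τ ∈ Aut_F(K)` and `k ∈ K^×` with
`τ(a_i) = (Π_{l=i}^{m−1} σ^l(k))·b_i` for all `i`; every such `(τ, k)` yields the
isomorphism `G_{τ,k} = H_{τ,k} : S_f → S_g`. -/
theorem stmt19 {K : Type*} [Field K] (σ : K ≃+* K) (hσ : σ ≠ RingEquiv.refl K)
    (m : ℕ) (hm : 2 ≤ m) (a b : Fin m → K)
    (horder : ∀ j : ℕ, 0 < j → j < m - 1 → (⇑σ)^[j] ≠ id)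
    (hcomm : ∀ τ : K ≃+* K, (∀ c : K, σ c = c → τ c = c) → ∀ x, σ (τ x) = τ (σ x))
    (hna : ¬ PAssoc (⇑σ) a) (hnb : ¬ PAssoc (⇑σ) b) :
    ((∃ G : (Fin m → K) → (Fin m → K), IsPetitIso (⇑σ) a b G) ↔
      ∃ τ : K ≃+* K, (∀ c : K, σ c = c → τ c = c) ∧
        ∃ k : K, k ≠ 0 ∧
          ∀ i : Fin m, τ (a i) = (∏ l ∈ Finset.Ico (i : ℕ) m, (⇑σ)^[l] k) * b i)
    ∧ (∀ τ : K ≃+* K, (∀ c : K, σ c = c → τ c = c) →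
        ∀ k : K, k ≠ 0 →
        (∀ i : Fin m, τ (a i) = (∏ l ∈ Finset.Ico (i : ℕ) m, (⇑σ)^[l] k) * b i) →
        IsPetitIso (⇑σ) a b (Hmap (⇑σ) (⇑τ) k)) := by
  have hm0 : 0 < m := by omega
  have hτpart : ∀ τ : K ≃+* K, (∀ c : K, σ c = c → τ c = c) →
      ∀ k : K, k ≠ 0 →
      (∀ i : Fin m, τ (a i) = (∏ l ∈ Finset.Ico (i : ℕ) m, (⇑σ)^[l] k) * b i) →
      IsPetitIso (⇑σ) a b (Hmap (⇑σ) (⇑τ) k) := by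
    intro τ hfix k hk hcond
    exact Hmap_iso σ τ hfix (fun x => hcomm τ hfix x) hk a b hcond
  refine ⟨⟨?_, ?_⟩, hτpart⟩
  swap
  · rintro ⟨τ, hfix, k, hk, hcond⟩
    exact ⟨_, hτpart τ hfix k hk hcond⟩
  rintro ⟨G, hG⟩
  have hfa : ∃ z, fres σ a z ≠ 0 := exists_fres_ne σ hm0 a hna
  have hfb : ∃ z, fres σ b z ≠ 0 := exists_fres_ne σ hm0 b hnb
  have hG0 : G 0 = 0 := by
    have h := hG.map_add 0 0
    rw [add_zero] at h
    exact (left_eq_add.mp h)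
  have hnuc : ∀ u : Fin m → K,
      (∀ y z, pmul (⇑σ) b (pmul (⇑σ) b (G u) y) z = pmul (⇑σ) b (G u) (pmul (⇑σ) b y z)) ↔
      (∀ y z, pmul (⇑σ) a (pmul (⇑σ) a u y) z = pmul (⇑σ) a u (pmul (⇑σ) a y z)) := by
    intro u
    constructor
    · intro h y z
      apply hG.bijective.injective
      rw [hG.map_mul, hG.map_mul, hG.map_mul, hG.map_mul]
      exact h (G y) (G z)
    · intro h y z
      obtain ⟨y', hy'⟩ := hG.bijective.surjective y
      obtain ⟨z', hz'⟩ := hG.bijective.surjective z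
      rw [← hy', ← hz', ← hG.map_mul, ← hG.map_mul, ← hG.map_mul, ← hG.map_mul, h y' z']
  have hiota_nucl : ∀ (cv : Fin m → K) (c : K), ∀ y z,
      pmul (⇑σ) cv (pmul (⇑σ) cv (iota K m c) y) z
        = pmul (⇑σ) cv (iota K m c) (pmul (⇑σ) cv y z) := by
    intro cv c y z
    rw [pmul_iota_left σ hm0, pmul_iota_left σ hm0, pmul_smul_left]
  have hGzero : ∀ (c : K) (i : Fin m), (i : ℕ) ≠ 0 → G (iota K m c) i = 0 := by
    intro c
    exact nucl_coeffs σ hm b hfb (G (iota K m c)) ((hnuc (iota K m c)).mpr (hiota_nucl a c))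
  set τ₀ : K → K := fun c => G (iota K m c) ⟨0, hm0⟩ with hτ₀
  have hGiota : ∀ c, G (iota K m c) = iota K m (τ₀ c) := by
    intro c
    funext i
    by_cases h : (i : ℕ) = 0
    · have hi : i = ⟨0, hm0⟩ := Fin.ext h
      subst hi
      simp [iota, hτ₀]
    · rw [hGzero c i h]
      simp [iota, h]
  have hiota_inj : ∀ c d : K, iota K m c = iota K m d → c = d := by
    intro c d h
    have h0 := congrFun h ⟨0, hm0⟩
    simpa [iota] using h0
  have hτadd : ∀ c d, τ₀ (c + d) = τ₀ c + τ₀ d := by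
    intro c d
    have h1 : G (iota K m (c + d)) = G (iota K m c) + G (iota K m d) := by
      rw [iota_add', hG.map_add]
    rw [hGiota, hGiota, hGiota] at h1
    have h0 := congrFun h1 ⟨0, hm0⟩
    simpa [iota] using h0
  have hτmul : ∀ c d, τ₀ (c * d) = τ₀ c * τ₀ d := by
    intro c d
    have h1 := hG.map_mul (iota K m c) (iota K m d)
    rw [pmul_iota_left σ hm0, smul_iota, hGiota, hGiota, hGiota,
      pmul_iota_left σ hm0, smul_iota] at h1
    exact hiota_inj _ _ h1
  have hτ1 : τ₀ 1 = 1 := by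
    have h1 : G (iota K m 1) = iota K m 1 := by
      rw [← pone_eq_iota_one]
      exact hG.map_one
    rw [hGiota] at h1
    exact hiota_inj _ _ h1
  have hτ0 : τ₀ 0 = 0 := by
    have hz : iota K m (0 : K) = 0 := by funext i; simp [iota]
    have h1 : G (iota K m 0) = iota K m 0 := by rw [hz, hG0]
    rw [hGiota] at h1
    exact hiota_inj _ _ h1
  have hτinj : Function.Injective τ₀ := by
    intro c d h
    apply hiota_inj
    apply hG.bijective.injective
    rw [hGiota, hGiota, h]
  have hτsurj : Function.Surjective τ₀ := by
    intro w
    obtain ⟨u, hu⟩ := hG.bijective.surjective (iota K m w)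
    have hun : ∀ y z, pmul (⇑σ) a (pmul (⇑σ) a u y) z = pmul (⇑σ) a u (pmul (⇑σ) a y z) := by
      apply (hnuc u).mp
      rw [hu]
      exact hiota_nucl b w
    have hcoeff := nucl_coeffs σ hm a hfa u hun
    have hu' : u = iota K m (u ⟨0, hm0⟩) := by
      funext i
      by_cases h : (i : ℕ) = 0
      · have hi : i = ⟨0, hm0⟩ := Fin.ext h
        subst hi
        simp [iota]
      · rw [hcoeff i h]
        simp [iota, h]
    refine ⟨u ⟨0, hm0⟩, ?_⟩
    show G (iota K m (u ⟨0, hm0⟩)) ⟨0, hm0⟩ = w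
    rw [← hu', hu]
    simp [iota]
  set τ : K ≃+* K :=
    { toEquiv := Equiv.ofBijective τ₀ ⟨hτinj, hτsurj⟩,
      map_mul' := (fun c d => hτmul c d),
      map_add' := (fun c d => hτadd c d) } with hτdef
  have hτcoe : ∀ c, τ c = τ₀ c := fun c => rfl
  have hfixτ : ∀ c : K, σ c = c → τ₀ c = c := by
    intro c hc
    have h1 : G (iota K m c) = iota K m c := by
      rw [← smul_pone, hG.map_smul c hc, hG.map_one, smul_pone]
    rw [hGiota] at h1
    exact hiota_inj _ _ h1
  have hστ : ∀ z, σ (τ₀ z) = τ₀ (σ z) := by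
    intro z
    exact hcomm τ (fun c hc => hfixτ c hc) z
  -- the image of t
  have hrel : ∀ z : K, pmul (⇑σ) b (G (tvec K m)) (iota K m (τ₀ z))
      = τ₀ (σ z) • G (tvec K m) := by
    intro z
    have h1 : pmul (⇑σ) a (tvec K m) (iota K m z)
        = pmul (⇑σ) a (iota K m (σ z)) (tvec K m) := by
      rw [pmul_tvec_iota σ hm, pmul_iota_left σ hm0]
    have h2 := congrArg G h1
    rw [hG.map_mul, hG.map_mul, hGiota, hGiota, pmul_iota_left σ hm0] at h2
    exact h2
  have hcoef : ∀ (z : K) (i : Fin m),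
      G (tvec K m) i * (⇑σ)^[(i : ℕ)] (τ₀ z) = τ₀ (σ z) * G (tvec K m) i := by
    intro z i
    have h := hrel z
    rw [pmul_iota_right σ hm0] at h
    have h0 := congrFun h i
    simpa using h0
  have hGt0 : ∀ i : Fin m, (i : ℕ) ≠ 1 → G (tvec K m) i = 0 := by
    intro i hi
    by_contra hne
    have hall : ∀ w : K, (⇑σ)^[(i : ℕ)] w = σ w := by
      intro w
      obtain ⟨z, hz⟩ := hτsurj w
      have h1 := hcoef z i
      rw [← hστ z, hz, mul_comm (σ w) (G (tvec K m) i)] at h1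
      exact mul_left_cancel₀ hne h1
    rcases Nat.lt_or_ge (i : ℕ) 1 with h1 | h1
    · have h0 : (i : ℕ) = 0 := by omega
      apply hσ
      ext w
      have h2 := hall w
      rw [h0] at h2
      simpa using h2.symm
    · have h2 : 2 ≤ (i : ℕ) := by omega
      have hj1 : 0 < (i : ℕ) - 1 := by omega
      have hj2 : (i : ℕ) - 1 < m - 1 := by have := i.isLt; omega
      apply horder ((i : ℕ) - 1) hj1 hj2
      funext w
      have h3 := hall w
      have h4 : (⇑σ)^[(i : ℕ)] w = σ ((⇑σ)^[(i : ℕ) - 1] w) := by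
        rw [← Function.iterate_succ_apply' (⇑σ) ((i : ℕ) - 1) w]
        congr 1
        omega
      rw [h4] at h3
      have h5 := σ.injective h3
      simpa using h5
  set k := G (tvec K m) ⟨1, by omega⟩ with hkdef
  have hGt : G (tvec K m) = k • tvec K m := by
    funext i
    by_cases h : (i : ℕ) = 1
    · have hi : i = ⟨1, by omega⟩ := Fin.ext h
      rw [hi, hkdef]
      simp [tvec]
    · rw [hGt0 i h]
      simp [tvec, h]
  have hkne : k ≠ 0 := by
    intro h0
    have htv : tvec K m = 0 := by
      apply hG.bijective.injective
      rw [hG0, hGt, h0, zero_smul]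
    have h1 := congrFun htv ⟨1, by omega⟩
    simp [tvec] at h1
  -- G on the basis
  have hGev : ∀ s : ℕ, s < m → G (evec K m s) = Pp (⇑σ) k s • evec K m s := by
    intro s
    induction s with
    | zero =>
      intro _
      rw [evec_zero_eq_pone, hG.map_one]
      unfold Pp
      rw [Finset.prod_range_zero, one_smul]
    | succ s IH =>
      intro hs
      have hsm : s < m := by omega
      have h1 : evec K m (s + 1) = pmul (⇑σ) a (tvec K m) (evec K m s) :=
        (pmul_tvec_evec σ hm a hs).symm
      rw [h1, hG.map_mul, hGt, IH hsm, pmul_smul_left, pmul_tvec_smul σ hm b,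
        pmul_tvec_evec σ hm b hs, smul_smul, Pp_succ', mul_comm (σ (Pp (⇑σ) k s)) k, ← h1]
  have hGsum : ∀ (t : Finset (Fin m)) (F : Fin m → Fin m → K),
      G (∑ s ∈ t, F s) = ∑ s ∈ t, G (F s) := by
    intro t F
    induction t using Finset.induction_on with
    | empty => simpa using hG0
    | insert _ _ h ih => rw [Finset.sum_insert h, Finset.sum_insert h, hG.map_add, ih]
  have hGx : ∀ x : Fin m → K, G x = Hmap (⇑σ) τ₀ k x := by
    intro x
    have hx : x = ∑ s : Fin m, x s • evec K m (s : ℕ) := (sum_smul_evec x).symm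
    conv_lhs => rw [hx]
    rw [hGsum]
    have hterm : ∀ s : Fin m, G (x s • evec K m (s : ℕ))
        = (τ₀ (x s) * Pp (⇑σ) k (s : ℕ)) • evec K m (s : ℕ) := by
      intro s
      have h1 : x s • evec K m (s : ℕ) = pmul (⇑σ) a (iota K m (x s)) (evec K m (s : ℕ)) :=
        (pmul_iota_left σ hm0 a (x s) _).symm
      rw [h1, hG.map_mul, hGiota, hGev s s.isLt, pmul_iota_left σ hm0, smul_smul]
    rw [Finset.sum_congr rfl (fun s _ => hterm s)]
    have hH : Hmap (⇑σ) τ₀ k x = fun i => τ₀ (x i) * Pp (⇑σ) k (i : ℕ) := rfl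
    rw [hH]
    exact sum_smul_evec _
  -- coefficient relation
  have hGa : G a = Pp (⇑σ) k m • b := by
    have h1 := congrArg G (pmul_tvec_top σ hm a).symm
    rw [hG.map_mul, hGt, hGev (m - 1) (by omega), pmul_smul_left, pmul_tvec_smul σ hm b,
      pmul_tvec_top σ hm b, smul_smul] at h1
    rw [h1]
    congr 1
    calc k * σ (Pp (⇑σ) k (m - 1)) = σ (Pp (⇑σ) k (m - 1)) * k := mul_comm _ _
      _ = Pp (⇑σ) k ((m - 1) + 1) := (Pp_succ' σ k (m - 1)).symm
      _ = Pp (⇑σ) k m := by congr 1; omega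
  have hcond : ∀ i : Fin m, τ₀ (a i) = (∏ l ∈ Finset.Ico (i : ℕ) m, (⇑σ)^[l] k) * b i := by
    intro i
    have h0 := congrFun (hGa.symm.trans (hGx a)) i
    have hl : (Pp (⇑σ) k m • b) i = Pp (⇑σ) k m * b i := rfl
    have hr : Hmap (⇑σ) τ₀ k a i = τ₀ (a i) * Pp (⇑σ) k (i : ℕ) := rfl
    rw [hl, hr] at h0
    have hkey := Pp_key σ k (le_refl m) i.isLt
    rw [Nat.sub_self] at hkey
    simp only [Nat.zero_add, Function.iterate_zero, id_eq] at hkey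
    have hPne := Pp_ne_zero σ hkne (i : ℕ)
    apply mul_right_cancel₀ hPne
    rw [← h0, ← hkey]
    ring
  exact ⟨τ, fun c hc => hfixτ c hc, k, hkne, fun i => hcond i⟩
end
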